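/- arXiv:0706.3526 — 11 statements merged into one kernel-verified Lean document; each statement's English description precedes it below -/
import Mathlib

section
/- Let d be a positive natural number and let Ω be a finite index set. Suppose for each i ∈ Ω we are given a linear map Φ_i : Matrix (Fin d) (Fin d) ℂ →ₗ[ℂ] Matrix (Fin d) (Fin d) ℂ which is positive (it maps positive semidefinite matrices to positive semidefinite matrices), and suppose that ∑_{i ∈ Ω} Φ_i(T) = T for every matrix T. Then for each i ∈ Ω there exists a constant λ_i ∈ ℝ such that trace(Φ_i(T)) = λ_i for every density matrix T; equivalently, the induced observable is trivial: trace(Φ_i(T)) = λ_i · trace(T) for every matrix T. -/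
open scoped ComplexOrder MatrixOrder
open Matrix Complex

/-!
The operations are positive and sum to the identity, so `0 ≤ Φ i (ψψ*) ≤ ψψ*` for every vector
`ψ`, and a positive matrix below a rank-one projection is a multiple of it. Applying `Φ i` to the
parallelogram identity for orthogonal `ψ, φ` shows that the multiples for `ψ`, `φ` and `ψ + φ`
agree; by polarization `Φ i = λ • id`, and `λ ≥ 0` by positivity.
-/

namespace Matrix

section RCLike

variable {n 𝕜 : Type*} [RCLike 𝕜]

lemma vecMulVec_add_add_vecMulVec_sub (ψ φ : n → 𝕜) :
    vecMulVec (ψ + φ) (star (ψ + φ)) + vecMulVec (ψ - φ) (star (ψ - φ)) =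
      (2 : 𝕜) • vecMulVec ψ (star ψ) + (2 : 𝕜) • vecMulVec φ (star φ) := by
  ext a b
  simp only [add_apply, smul_apply, vecMulVec_apply, Pi.add_apply, Pi.sub_apply, Pi.star_apply,
    star_add, star_sub, smul_eq_mul]
  ring

variable [Fintype n]

lemma dotProduct_vecMulVec_mulVec (x y u v : n → 𝕜) :
    star x ⬝ᵥ (vecMulVec u (star v) *ᵥ y) = (star x ⬝ᵥ u) * (star v ⬝ᵥ y) := by
  rw [vecMulVec_mulVec, op_smul_eq_smul, dotProduct_smul, smul_eq_mul, mul_comm]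

lemma mulVec_eq_zero_of_le_vecMulVec {P : Matrix n n 𝕜} {ψ x : n → 𝕜}
    (h0 : 0 ≤ P) (hle : P ≤ vecMulVec ψ (star ψ)) (hx : star ψ ⬝ᵥ x = 0) : P *ᵥ x = 0 := by
  have hP := h0.posSemidef
  refine (hP.dotProduct_mulVec_zero_iff x).mp (le_antisymm ?_ (hP.dotProduct_mulVec_nonneg x))
  have h := (le_iff.mp hle).dotProduct_mulVec_nonneg x
  rwa [sub_mulVec, dotProduct_sub, dotProduct_vecMulVec_mulVec, hx, mul_zero, zero_sub,
    neg_nonneg] at h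

theorem eq_smul_vecMulVec_of_le {P : Matrix n n 𝕜} {ψ : n → 𝕜}
    (h0 : 0 ≤ P) (hle : P ≤ vecMulVec ψ (star ψ)) : ∃ c : 𝕜, P = c • vecMulVec ψ (star ψ) := by
  have hker (x : n → 𝕜) := mulVec_eq_zero_of_le_vecMulVec h0 hle (x := x)
  by_cases hψ : ψ = 0
  · exact ⟨0, ext_iff_mulVec.mpr fun x => by simpa [hψ] using hker x⟩
  set N := star ψ ⬝ᵥ ψ
  set v := P *ᵥ ψ
  have hN : N ≠ 0 := fun h => hψ (dotProduct_star_self_eq_zero.mp h)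
  have hNstar : star N = N := by simp only [N, ← star_dotProduct_star, star_star]
  -- `N • x - (ψ* x) • ψ` is orthogonal to `ψ`, so `P` kills it.
  have hcol : N • P = vecMulVec v (star ψ) := by
    refine ext_iff_mulVec.mpr fun x => ?_
    have h := hker (N • x - (star ψ ⬝ᵥ x) • ψ) (by
      simp only [dotProduct_sub, dotProduct_smul, smul_eq_mul, N]; ring)
    rw [mulVec_sub, mulVec_smul, mulVec_smul, sub_eq_zero] at h
    rw [smul_mulVec, h, vecMulVec_mulVec, op_smul_eq_smul]
  have hrow : N • P = vecMulVec ψ (star v) := by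
    simpa [conjTranspose_smul, hNstar, h0.posSemidef.1.eq] using congrArg (·ᴴ) hcol
  have hv : N • v = (star v ⬝ᵥ ψ) • ψ := by
    rw [← smul_mulVec, hrow, vecMulVec_mulVec, op_smul_eq_smul]
  refine ⟨(N * N)⁻¹ * (star v ⬝ᵥ ψ), ?_⟩
  rw [mul_smul, ← smul_vecMulVec, ← hv, smul_vecMulVec, ← hcol, smul_smul, smul_smul, mul_assoc,
    inv_mul_cancel₀ (mul_ne_zero hN hN), one_smul]

theorem eigenvalue_eq_of_orthogonal {L : Matrix n n 𝕜 →ₗ[𝕜] Matrix n n 𝕜} {c : (n → 𝕜) → 𝕜}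
    (hc : ∀ ψ, L (vecMulVec ψ (star ψ)) = c ψ • vecMulVec ψ (star ψ))
    {ψ φ : n → 𝕜} (hψ : ψ ≠ 0) (hφ : φ ≠ 0) (horth : star ψ ⬝ᵥ φ = 0) :
    c φ = c ψ ∧ c (ψ + φ) = c ψ := by
  have horth' : star φ ⬝ᵥ ψ = 0 := by rw [star_dotProduct, horth, star_zero]
  have key := congrArg L (vecMulVec_add_add_vecMulVec_sub ψ φ)
  rw [map_add, map_add, map_smul, map_smul, hc, hc, hc, hc, smul_smul, smul_smul] at key
  have eval (x y : n → 𝕜) := congrArg (fun M => star x ⬝ᵥ (M *ᵥ y)) key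
  have eψ := eval ψ ψ
  have eφ := eval φ φ
  have eψφ := eval ψ φ
  simp only [add_mulVec, smul_mulVec, dotProduct_add, dotProduct_smul,
    dotProduct_vecMulVec_mulVec, smul_eq_mul] at eψ eφ eψφ
  simp only [star_add, star_sub, add_dotProduct, sub_dotProduct, dotProduct_sub,
    horth, horth', add_zero, zero_add, sub_zero, zero_sub, mul_zero, zero_mul] at eψ eφ eψφ
  have hNψ : star ψ ⬝ᵥ ψ ≠ 0 := fun h => hψ (dotProduct_star_self_eq_zero.mp h)
  have hNφ : star φ ⬝ᵥ φ ≠ 0 := fun h => hφ (dotProduct_star_self_eq_zero.mp h)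
  have hdiff : (c (ψ + φ) - c (ψ - φ)) * (star ψ ⬝ᵥ ψ * star φ ⬝ᵥ φ) = 0 := by
    linear_combination eψφ
  have hsumψ : (c (ψ + φ) + c (ψ - φ) - 2 * c ψ) * (star ψ ⬝ᵥ ψ * star ψ ⬝ᵥ ψ) = 0 := by
    linear_combination eψ
  have hsumφ : (c (ψ + φ) + c (ψ - φ) - 2 * c φ) * (star φ ⬝ᵥ φ * star φ ⬝ᵥ φ) = 0 := by
    linear_combination eφ
  simp only [mul_eq_zero, hNψ, hNφ, or_self, or_false] at hdiff hsumψ hsumφ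
  exact ⟨by linear_combination (hsumψ - hsumφ) / 2, by linear_combination (hsumψ + hdiff) / 2⟩

end RCLike

variable {n : Type*} [Fintype n]

lemma four_smul_vecMulVec_star_eq_sum (ψ φ : n → ℂ) :
    (4 : ℂ) • vecMulVec ψ (star φ) =
      ∑ k ∈ Finset.range 4, I ^ k • vecMulVec (ψ + I ^ k • φ) (star (ψ + I ^ k • φ)) := by
  ext a b
  simp only [Finset.sum_range_succ, Finset.sum_range_zero, zero_add, pow_zero, pow_one, I_sq,
    I_pow_three, add_apply, smul_apply, vecMulVec_apply, Pi.add_apply, Pi.smul_apply,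
    Pi.star_apply, star_add, star_smul, smul_eq_mul, Complex.star_def, map_neg, map_one, conj_I]
  ring_nf
  rw [I_sq]
  ring

theorem map_vecMulVec_star_of_orthogonal {L : Matrix n n ℂ →ₗ[ℂ] Matrix n n ℂ}
    {c : (n → ℂ) → ℂ} (hc : ∀ ψ, L (vecMulVec ψ (star ψ)) = c ψ • vecMulVec ψ (star ψ))
    {ψ φ : n → ℂ} (hψ : ψ ≠ 0) (hφ : φ ≠ 0) (horth : star ψ ⬝ᵥ φ = 0) :
    L (vecMulVec ψ (star φ)) = c ψ • vecMulVec ψ (star φ) := by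
  have hterm (k : ℕ) :
      L (I ^ k • vecMulVec (ψ + I ^ k • φ) (star (ψ + I ^ k • φ))) =
        c ψ • I ^ k • vecMulVec (ψ + I ^ k • φ) (star (ψ + I ^ k • φ)) := by
    have hk := eigenvalue_eq_of_orthogonal hc hψ (smul_ne_zero (pow_ne_zero k I_ne_zero) hφ)
      (by rw [dotProduct_smul, horth, smul_zero])
    rw [map_smul, hc, hk.2, smul_comm]
  have h4 := congrArg L (four_smul_vecMulVec_star_eq_sum ψ φ)
  rw [map_smul, map_sum, Finset.sum_congr rfl fun k _ => hterm k, ← Finset.smul_sum,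
    ← four_smul_vecMulVec_star_eq_sum, smul_comm] at h4
  exact smul_right_injective _ four_ne_zero h4

theorem eq_smul_id_of_forall_vecMulVec [DecidableEq n] {L : Matrix n n ℂ →ₗ[ℂ] Matrix n n ℂ}
    {c : (n → ℂ) → ℂ} (hc : ∀ ψ, L (vecMulVec ψ (star ψ)) = c ψ • vecMulVec ψ (star ψ))
    (z : n) : L = c (Pi.single z 1) • LinearMap.id := by
  have hsingle (i : n) : (Pi.single i 1 : n → ℂ) ≠ 0 := by simp
  have horth {i j : n} (hij : i ≠ j) : star (Pi.single i 1 : n → ℂ) ⬝ᵥ Pi.single j 1 = 0 := by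
    simp [hij]
  have hstar (j : n) : star (Pi.single j 1 : n → ℂ) = Pi.single j 1 := by
    rw [← Pi.single_star, star_one]
  have hdiag (i : n) : c (Pi.single i 1) = c (Pi.single z 1) := by
    rcases eq_or_ne z i with rfl | hzi
    · rfl
    · exact (eigenvalue_eq_of_orthogonal hc (hsingle z) (hsingle i) (horth hzi)).1
  refine ext_linearMap ℂ fun i j => LinearMap.ext_ring ?_
  simp only [LinearMap.comp_apply, singleLinearMap_apply, LinearMap.smul_apply,
    LinearMap.id_apply, single_eq_single_vecMulVec_single, ← hdiag i]
  rcases eq_or_ne i j with rfl | hij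
  · simpa only [hstar] using hc (Pi.single i 1)
  · simpa only [hstar] using
      map_vecMulVec_star_of_orthogonal hc (hsingle i) (hsingle j) (horth hij)

end Matrix

/-- "No information gain without disturbance": if a finite-outcome instrument
(given by positive linear operations summing to the identity map) leaves every
state unchanged, then the induced observable is trivial. -/
theorem no_information_without_disturbance
    (d : ℕ) (hd : 0 < d) (Ω : Type) [Fintype Ω]
    (Φ : Ω → (Matrix (Fin d) (Fin d) ℂ →ₗ[ℂ] Matrix (Fin d) (Fin d) ℂ))
    (hpos : ∀ i, ∀ T : Matrix (Fin d) (Fin d) ℂ, T.PosSemidef → (Φ i T).PosSemidef)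
    (hsum : ∀ T : Matrix (Fin d) (Fin d) ℂ, ∑ i, Φ i T = T) :
    ∀ i : Ω, ∃ lam : ℝ,
      (∀ T : Matrix (Fin d) (Fin d) ℂ, T.PosSemidef → T.trace = 1 →
        (Φ i T).trace = (lam : ℂ)) ∧
      (∀ T : Matrix (Fin d) (Fin d) ℂ, (Φ i T).trace = (lam : ℂ) * T.trace) := by
  intro i
  have hle (T : Matrix (Fin d) (Fin d) ℂ) (hT : T.PosSemidef) : Φ i T ≤ T :=
    (Finset.single_le_sum (fun j _ => (hpos j T hT).nonneg) (Finset.mem_univ i)).trans_eq (hsum T)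
  choose c hc using fun ψ : Fin d → ℂ =>
    have hψ := posSemidef_vecMulVec_self_star ψ
    eq_smul_vecMulVec_of_le (hpos i _ hψ).nonneg (hle _ hψ)
  set lam := c (Pi.single ⟨0, hd⟩ 1)
  have hΦ : Φ i = lam • LinearMap.id := eq_smul_id_of_forall_vecMulVec hc ⟨0, hd⟩
  have hlam : (lam.re : ℂ) = lam := by
    have h : (0 : ℂ) ≤ lam := by
      simpa [hΦ] using (hpos i 1 PosSemidef.one).diag_nonneg (i := ⟨0, hd⟩)
    exact (eq_re_of_ofReal_le (by rwa [ofReal_zero])).symm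
  have htrace (T : Matrix (Fin d) (Fin d) ℂ) : (Φ i T).trace = (lam.re : ℂ) * T.trace := by
    rw [hΦ, hlam, LinearMap.smul_apply, LinearMap.id_apply, trace_smul, smul_eq_mul]
  exact ⟨lam.re, fun T _ hT => by rw [htrace, hT, mul_one], htrace⟩
end

section
/- Let d be a positive natural number and let Φ, Ψ : Matrix (Fin d) (Fin d) ℂ →ₗ[ℂ] Matrix (Fin d) (Fin d) ℂ be linear maps, each positive (mapping positive semidefinite matrices to positive semidefinite matrices), such that Φ(T) + Ψ(T) = T for every matrix T. Then for every unit vector φ ∈ EuclideanSpace ℂ (Fin d) there exists a real number c with 0 ≤ c ≤ 1 such that Φ(P_φ) = c • P_φ, where P_φ denotes the rank-one matrix with entries (P_φ)_{jk} = φ_j · conj(φ_k) (the orthogonal projection onto the span of φ). -/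
open scoped ComplexOrder

/-!
Write `P = φ φ*`. Since `Φ P` and `Ψ P` are positive with sum `P`, every vector killed by `P`
is killed by `Φ P`, so `Φ P = (Φ P) P`; as `Φ P` and `P` are hermitian also `Φ P = P (Φ P)`,
hence `Φ P = P (Φ P) P = ⟪φ, Φ P φ⟫ • P`. The coefficient lies in `[0, 1]` because
`⟪φ, Φ P φ⟫ + ⟪φ, Ψ P φ⟫ = ⟪φ, P φ⟫ = 1` and both summands are nonnegative.
-/

namespace Matrix

theorem vecMulVec_mul_mul_vecMulVec {l m o p α : Type*} [Fintype m] [Fintype o]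
    [CommSemiring α] (u : l → α) (v : m → α) (M : Matrix m o α) (w : o → α) (x : p → α) :
    vecMulVec u v * M * vecMulVec w x = (v ⬝ᵥ M *ᵥ w) • vecMulVec u x := by
  rw [Matrix.mul_assoc, mul_vecMulVec, vecMulVec_mul_vecMulVec, vecMulVec_smul]

variable {n : Type*} [Fintype n]

theorem mul_eq_self_of_mulVec_eq_zero {m α : Type*} [Ring α] {A : Matrix m n α}
    {P : Matrix n n α} (hP : IsIdempotentElem P) (hker : ∀ x, P *ᵥ x = 0 → A *ᵥ x = 0) :
    A * P = A := by
  refine ext_iff_mulVec.mpr fun v => ?_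
  have hv : P *ᵥ (v - P *ᵥ v) = 0 := by
    rw [mulVec_sub, mulVec_mulVec, hP.eq, sub_self]
  rw [← mulVec_mulVec, eq_comm, ← sub_eq_zero, ← mulVec_sub, hker _ hv]

theorem isIdempotentElem_vecMulVec_star {α : Type*} [Semiring α] [Star α] {φ : n → α}
    (hφ : star φ ⬝ᵥ φ = 1) : IsIdempotentElem (vecMulVec φ (star φ)) := by
  rw [IsIdempotentElem, vecMulVec_mul_vecMulVec, hφ, one_smul]

variable {𝕜 : Type*} [RCLike 𝕜]

theorem PosSemidef.mulVec_eq_zero_of_add {A B : Matrix n n 𝕜} (hA : A.PosSemidef)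
    (hB : B.PosSemidef) {x : n → 𝕜} (hx : (A + B) *ᵥ x = 0) : A *ᵥ x = 0 := by
  have hsum : star x ⬝ᵥ A *ᵥ x + star x ⬝ᵥ B *ᵥ x = 0 := by
    rw [← dotProduct_add, ← add_mulVec, hx, dotProduct_zero]
  have hA0 : star x ⬝ᵥ A *ᵥ x = 0 :=
    ((add_eq_zero_iff_of_nonneg (hA.dotProduct_mulVec_nonneg x)
      (hB.dotProduct_mulVec_nonneg x)).mp hsum).1
  exact (hA.dotProduct_mulVec_zero_iff x).mp hA0

theorem PosSemidef.exists_eq_smul_vecMulVec_of_add_eq {A B : Matrix n n 𝕜} {φ : n → 𝕜}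
    (hA : A.PosSemidef) (hB : B.PosSemidef) (hφ : star φ ⬝ᵥ φ = 1)
    (hAB : A + B = vecMulVec φ (star φ)) :
    ∃ c : ℝ, 0 ≤ c ∧ c ≤ 1 ∧ A = (c : 𝕜) • vecMulVec φ (star φ) := by
  set P := vecMulVec φ (star φ)
  have hPh : Pᴴ = P := by simp [P]
  have hAP : A * P = A := mul_eq_self_of_mulVec_eq_zero (isIdempotentElem_vecMulVec_star hφ)
    fun x hx => hA.mulVec_eq_zero_of_add hB (hAB ▸ hx)
  have hPA : P * A = A := by
    simpa only [conjTranspose_mul, hA.isHermitian.eq, hPh] using congrArg (·ᴴ) hAP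
  have hPφ : P *ᵥ φ = φ := by
    rw [vecMulVec_mulVec, hφ, MulOpposite.op_one, one_smul]
  obtain ⟨c, hc0, hc⟩ := RCLike.nonneg_iff_exists_ofReal.mp (hA.dotProduct_mulVec_nonneg φ)
  refine ⟨c, hc0, ?_, ?_⟩
  · have hsum : star φ ⬝ᵥ A *ᵥ φ + star φ ⬝ᵥ B *ᵥ φ = 1 := by
      rw [← dotProduct_add, ← add_mulVec, hAB, hPφ, hφ]
    rw [← RCLike.ofReal_le_ofReal (K := 𝕜), hc, RCLike.ofReal_one, ← hsum]
    exact le_add_of_nonneg_right (hB.dotProduct_mulVec_nonneg φ)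
  · rw [hc, ← vecMulVec_mul_mul_vecMulVec, hPA, hAP]

end Matrix

open Matrix

theorem operation_rescales_pure_states_general
    (d : ℕ)
    (Φ Ψ : Matrix (Fin d) (Fin d) ℂ →ₗ[ℂ] Matrix (Fin d) (Fin d) ℂ)
    (hΦ : ∀ T : Matrix (Fin d) (Fin d) ℂ, T.PosSemidef → (Φ T).PosSemidef)
    (hΨ : ∀ T : Matrix (Fin d) (Fin d) ℂ, T.PosSemidef → (Ψ T).PosSemidef)
    (hsum : ∀ T : Matrix (Fin d) (Fin d) ℂ, Φ T + Ψ T = T) :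
    ∀ φ : EuclideanSpace ℂ (Fin d), ‖φ‖ = 1 →
      ∃ c : ℝ, 0 ≤ c ∧ c ≤ 1 ∧
        Φ (Matrix.of fun j k => φ j * star (φ k)) =
          (c : ℂ) • (Matrix.of fun j k => φ j * star (φ k)) := by
  intro φ hφ
  have hunit : star φ.ofLp ⬝ᵥ φ.ofLp = 1 := by
    rw [dotProduct_comm, ← EuclideanSpace.inner_eq_star_dotProduct, inner_self_eq_norm_sq_to_K,
      hφ]
    norm_num
  have hP := posSemidef_vecMulVec_self_star φ.ofLp
  exact PosSemidef.exists_eq_smul_vecMulVec_of_add_eq (hΦ _ hP) (hΨ _ hP) hunit (hsum _)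

/-- A nondisturbing pair of positive operations can only rescale each pure state. -/
theorem operation_rescales_pure_states
    (d : ℕ) (hd : 0 < d)
    (Φ Ψ : Matrix (Fin d) (Fin d) ℂ →ₗ[ℂ] Matrix (Fin d) (Fin d) ℂ)
    (hΦ : ∀ T : Matrix (Fin d) (Fin d) ℂ, T.PosSemidef → (Φ T).PosSemidef)
    (hΨ : ∀ T : Matrix (Fin d) (Fin d) ℂ, T.PosSemidef → (Ψ T).PosSemidef)
    (hsum : ∀ T : Matrix (Fin d) (Fin d) ℂ, Φ T + Ψ T = T) :
    ∀ φ : EuclideanSpace ℂ (Fin d), ‖φ‖ = 1 →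
      ∃ c : ℝ, 0 ≤ c ∧ c ≤ 1 ∧
        Φ (Matrix.of fun j k => φ j * star (φ k)) =
          (c : ℂ) • (Matrix.of fun j k => φ j * star (φ k)) :=
  operation_rescales_pure_states_general d Φ Ψ hΦ hΨ hsum
end

section
/- Let d₁, d₂ be positive natural numbers, let H₁ = EuclideanSpace ℂ (Fin d₁), H₂ = EuclideanSpace ℂ (Fin d₂), and identify H₁ ⊗ H₂ with EuclideanSpace ℂ (Fin d₁ × Fin d₂) via (φ ⊗ ϕ)(i,j) = φ(i) · ϕ(j). Let U be a unitary operator on H₁ ⊗ H₂ such that for all vectors φ ∈ H₁ and ϕ ∈ H₂ there exist φ' ∈ H₁ and ϕ' ∈ H₂ with U(φ ⊗ ϕ) = φ' ⊗ ϕ'. Then one of the following holds: (A) there exist unitary operators V on H₁ and W on H₂ such that U(φ ⊗ ϕ) = (V φ) ⊗ (W ϕ) for all φ, ϕ; or (B) there exist surjective linear isometries V : H₂ → H₁ and W : H₁ → H₂ such that U(φ ⊗ ϕ) = (V ϕ) ⊗ (W φ) for all φ, ϕ (which can only occur when d₁ = d₂). -/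
/-!
Write `U (eᵢ ⊗ fⱼ) = aᵢⱼ ⊗ bᵢⱼ`. These vectors are orthonormal, and their sum over any rectangle
`I × J` is again a product vector, namely `U ((∑_{i ∈ I} eᵢ) ⊗ (∑_{j ∈ J} fⱼ))`.

If `a ⊗ b + c ⊗ d = x ⊗ y` with `a ⊥ c`, pairing with `a ⊗ v` shows that `b` and `d` are both
multiples of `y`. So two cells in a common row or column share the line of their first factors or
that of their second factors, and orthonormality forbids sharing both. Combinatorially this leaves
two patterns: first factors constant along rows and second factors constant along columns, or the
transpose (a dimension count excludes a factor that is constant along both). In the first pattern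
`aᵢⱼ ⊗ bᵢⱼ = sᵢⱼ • aᵢ₀ ⊗ b₀ⱼ`, the rectangle sums force `s` to have rank one, and hence
`aᵢⱼ ⊗ bᵢⱼ = uᵢ ⊗ wⱼ` for orthonormal bases `u` and `w`, which define `V` and `W`. The transposed
pattern gives the swap.
-/

open scoped ComplexOrder

/-- Elementary tensor of two Euclidean vectors, with `(φ ⊗ ϕ)(i,j) = φ i * ϕ j`. -/
noncomputable def tens {d₁ d₂ : ℕ} (φ : EuclideanSpace ℂ (Fin d₁))
    (ϕ : EuclideanSpace ℂ (Fin d₂)) : EuclideanSpace ℂ (Fin d₁ × Fin d₂) :=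
  WithLp.toLp 2 (fun p : Fin d₁ × Fin d₂ => φ p.1 * ϕ p.2)

open scoped InnerProductSpace
open Finset

section Tens

variable {m n : ℕ}

lemma tens_add_left (φ φ' : EuclideanSpace ℂ (Fin m)) (ϕ : EuclideanSpace ℂ (Fin n)) :
    tens (φ + φ') ϕ = tens φ ϕ + tens φ' ϕ := by
  ext p; simp [tens, add_mul]

lemma tens_add_right (φ : EuclideanSpace ℂ (Fin m)) (ϕ ϕ' : EuclideanSpace ℂ (Fin n)) :
    tens φ (ϕ + ϕ') = tens φ ϕ + tens φ ϕ' := by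
  ext p; simp [tens, mul_add]

lemma tens_smul_left (c : ℂ) (φ : EuclideanSpace ℂ (Fin m)) (ϕ : EuclideanSpace ℂ (Fin n)) :
    tens (c • φ) ϕ = c • tens φ ϕ := by
  ext p; simp [tens, mul_assoc]

lemma tens_smul_right (c : ℂ) (φ : EuclideanSpace ℂ (Fin m)) (ϕ : EuclideanSpace ℂ (Fin n)) :
    tens φ (c • ϕ) = c • tens φ ϕ := by
  ext p; simp [tens, mul_left_comm]

noncomputable def tensₗ : EuclideanSpace ℂ (Fin m) →ₗ[ℂ] EuclideanSpace ℂ (Fin n) →ₗ[ℂ]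
    EuclideanSpace ℂ (Fin m × Fin n) :=
  LinearMap.mk₂ ℂ tens tens_add_left tens_smul_left tens_add_right tens_smul_right

@[simp] lemma tensₗ_apply (φ : EuclideanSpace ℂ (Fin m)) (ϕ : EuclideanSpace ℂ (Fin n)) :
    tensₗ φ ϕ = tens φ ϕ := rfl

@[simp] lemma tens_zero_left (ϕ : EuclideanSpace ℂ (Fin n)) :
    tens (0 : EuclideanSpace ℂ (Fin m)) ϕ = 0 :=
  tensₗ.map_zero₂ ϕ

@[simp] lemma tens_zero_right (φ : EuclideanSpace ℂ (Fin m)) :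
    tens φ (0 : EuclideanSpace ℂ (Fin n)) = 0 :=
  (tensₗ φ).map_zero

lemma tens_sum_sum {ι κ : Type*} (I : Finset ι) (J : Finset κ)
    (φ : ι → EuclideanSpace ℂ (Fin m)) (ϕ : κ → EuclideanSpace ℂ (Fin n)) :
    tens (∑ i ∈ I, φ i) (∑ j ∈ J, ϕ j) = ∑ i ∈ I, ∑ j ∈ J, tens (φ i) (ϕ j) := by
  simp only [← tensₗ_apply, map_sum, LinearMap.coe_sum, Finset.sum_apply]
  exact Finset.sum_comm

lemma tens_single_single (i : Fin m) (j : Fin n) :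
    tens (EuclideanSpace.single i (1 : ℂ)) (EuclideanSpace.single j 1) =
      EuclideanSpace.single (i, j) 1 := by
  ext ⟨k, l⟩
  by_cases hk : k = i <;> by_cases hl : l = j <;> simp [tens, hk, hl]

lemma inner_tens (φ φ' : EuclideanSpace ℂ (Fin m)) (ϕ ϕ' : EuclideanSpace ℂ (Fin n)) :
    ⟪tens φ ϕ, tens φ' ϕ'⟫_ℂ = ⟪φ, φ'⟫_ℂ * ⟪ϕ, ϕ'⟫_ℂ := by
  simp only [PiLp.inner_apply, RCLike.inner_apply, tens, Fintype.sum_prod_type, Finset.sum_mul_sum,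
    map_mul]
  exact Finset.sum_congr rfl fun _ _ => Finset.sum_congr rfl fun _ _ => by ring

lemma norm_tens (φ : EuclideanSpace ℂ (Fin m)) (ϕ : EuclideanSpace ℂ (Fin n)) :
    ‖tens φ ϕ‖ = ‖φ‖ * ‖ϕ‖ := by
  rw [EuclideanSpace.norm_eq, EuclideanSpace.norm_eq, EuclideanSpace.norm_eq,
    ← Real.sqrt_mul (by positivity), Finset.sum_mul_sum, Fintype.sum_prod_type]
  simp [tens, mul_pow]

end Tens

section Lines

lemma span_singleton_eq_of_mem {K V : Type*} [DivisionRing K] [AddCommGroup V] [Module K V]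
    {x y : V} (hx : x ≠ 0) (h : x ∈ K ∙ y) : K ∙ x = K ∙ y := by
  obtain ⟨t, rfl⟩ := Submodule.mem_span_singleton.1 h
  exact Submodule.span_singleton_smul_eq (IsUnit.mk0 t (left_ne_zero_of_smul hx)) y

variable {𝕜 E : Type*} [RCLike 𝕜] [NormedAddCommGroup E] [InnerProductSpace 𝕜 E]

lemma inner_ne_zero_of_span_singleton_eq {x y : E} (hx : x ≠ 0) (h : 𝕜 ∙ x = 𝕜 ∙ y) :
    ⟪x, y⟫_𝕜 ≠ 0 := by
  obtain ⟨z, rfl⟩ := Submodule.span_singleton_eq_span_singleton.1 h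
  rw [Units.smul_def, inner_smul_right]
  exact mul_ne_zero z.ne_zero (inner_self_ne_zero.2 hx)

end Lines

section Contraction

variable {m n : ℕ} {a c x : EuclideanSpace ℂ (Fin m)} {b d y : EuclideanSpace ℂ (Fin n)}

lemma mem_span_right_of_tens_add_tens_eq_tens (h : tens a b + tens c d = tens x y)
    (hac : ⟪a, c⟫_ℂ = 0) (ha : a ≠ 0) : b ∈ ℂ ∙ y := by
  have key : ⟪a, a⟫_ℂ • b = ⟪a, x⟫_ℂ • y := by
    refine ext_inner_left ℂ fun v => ?_
    have hv := congrArg (⟪tens a v, ·⟫_ℂ) h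
    simp only [inner_add_right, inner_tens, hac, zero_mul, add_zero] at hv
    rw [inner_smul_right, inner_smul_right]
    linear_combination hv
  refine Submodule.mem_span_singleton.2 ⟨(⟪a, a⟫_ℂ)⁻¹ * ⟪a, x⟫_ℂ, ?_⟩
  rw [mul_smul, ← key, inv_smul_smul₀ (inner_self_ne_zero.2 ha)]

lemma mem_span_left_of_tens_add_tens_eq_tens (h : tens a b + tens c d = tens x y)
    (hbd : ⟪b, d⟫_ℂ = 0) (hb : b ≠ 0) : a ∈ ℂ ∙ x := by
  have key : ⟪b, b⟫_ℂ • a = ⟪b, y⟫_ℂ • x := by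
    refine ext_inner_left ℂ fun v => ?_
    have hv := congrArg (⟪tens v b, ·⟫_ℂ) h
    simp only [inner_add_right, inner_tens, hbd, mul_zero, add_zero] at hv
    rw [inner_smul_right, inner_smul_right]
    linear_combination hv
  refine Submodule.mem_span_singleton.2 ⟨(⟪b, b⟫_ℂ)⁻¹ * ⟪b, y⟫_ℂ, ?_⟩
  rw [mul_smul, ← key, inv_smul_smul₀ (inner_self_ne_zero.2 hb)]

end Contraction

namespace Orthonormal

variable {m n : ℕ} {P : Type*} {a : P → EuclideanSpace ℂ (Fin m)}
  {b : P → EuclideanSpace ℂ (Fin n)} {p q : P}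

lemma tens_left_ne_zero (hON : Orthonormal ℂ fun p => tens (a p) (b p)) (p : P) : a p ≠ 0 :=
  fun h => hON.ne_zero p (by simp [h])

lemma tens_right_ne_zero (hON : Orthonormal ℂ fun p => tens (a p) (b p)) (p : P) : b p ≠ 0 :=
  fun h => hON.ne_zero p (by simp [h])

lemma tens_inner_mul_inner_eq_zero (hON : Orthonormal ℂ fun p => tens (a p) (b p))
    (hpq : p ≠ q) : ⟪a p, a q⟫_ℂ * ⟪b p, b q⟫_ℂ = 0 := by
  rw [← inner_tens]
  exact hON.2 hpq

lemma tens_inner_left_eq_zero (hON : Orthonormal ℂ fun p => tens (a p) (b p)) (hpq : p ≠ q)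
    (hb : ℂ ∙ b p = ℂ ∙ b q) : ⟪a p, a q⟫_ℂ = 0 :=
  (mul_eq_zero.1 (hON.tens_inner_mul_inner_eq_zero hpq)).resolve_right
    (inner_ne_zero_of_span_singleton_eq (hON.tens_right_ne_zero p) hb)

lemma tens_inner_right_eq_zero (hON : Orthonormal ℂ fun p => tens (a p) (b p)) (hpq : p ≠ q)
    (ha : ℂ ∙ a p = ℂ ∙ a q) : ⟪b p, b q⟫_ℂ = 0 :=
  (mul_eq_zero.1 (hON.tens_inner_mul_inner_eq_zero hpq)).resolve_left
    (inner_ne_zero_of_span_singleton_eq (hON.tens_left_ne_zero p) ha)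

lemma tens_eq_of_span_eq (hON : Orthonormal ℂ fun p => tens (a p) (b p))
    (ha : ℂ ∙ a p = ℂ ∙ a q) (hb : ℂ ∙ b p = ℂ ∙ b q) : p = q := by
  by_contra hpq
  exact inner_ne_zero_of_span_singleton_eq (hON.tens_left_ne_zero p) ha
    (hON.tens_inner_left_eq_zero hpq hb)

lemma tens_span_eq_or_span_eq (hON : Orthonormal ℂ fun p => tens (a p) (b p)) (hpq : p ≠ q)
    {x : EuclideanSpace ℂ (Fin m)} {y : EuclideanSpace ℂ (Fin n)}
    (h : tens (a p) (b p) + tens (a q) (b q) = tens x y) :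
    ℂ ∙ a p = ℂ ∙ a q ∨ ℂ ∙ b p = ℂ ∙ b q := by
  have h' : tens (a q) (b q) + tens (a p) (b p) = tens x y := by rwa [add_comm]
  rcases mul_eq_zero.1 (hON.tens_inner_mul_inner_eq_zero hpq) with hac | hbd
  · right
    rw [span_singleton_eq_of_mem (hON.tens_right_ne_zero p)
        (mem_span_right_of_tens_add_tens_eq_tens h hac (hON.tens_left_ne_zero p)),
      span_singleton_eq_of_mem (hON.tens_right_ne_zero q)
        (mem_span_right_of_tens_add_tens_eq_tens h' (inner_eq_zero_symm.1 hac)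
          (hON.tens_left_ne_zero q))]
  · left
    rw [span_singleton_eq_of_mem (hON.tens_left_ne_zero p)
        (mem_span_left_of_tens_add_tens_eq_tens h hbd (hON.tens_right_ne_zero p)),
      span_singleton_eq_of_mem (hON.tens_left_ne_zero q)
        (mem_span_left_of_tens_add_tens_eq_tens h' (inner_eq_zero_symm.1 hbd)
          (hON.tens_right_ne_zero q))]

lemma tens_card_le_of_span_left_eq [Fintype P] (hON : Orthonormal ℂ fun p => tens (a p) (b p))
    (ha : ∀ p q, ℂ ∙ a p = ℂ ∙ a q) : Fintype.card P ≤ n := by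
  simpa using (linearIndependent_of_ne_zero_of_inner_eq_zero hON.tens_right_ne_zero
    fun p q hpq => hON.tens_inner_right_eq_zero hpq (ha p q)).fintype_card_le_finrank

lemma tens_card_le_of_span_right_eq [Fintype P] (hON : Orthonormal ℂ fun p => tens (a p) (b p))
    (hb : ∀ p q, ℂ ∙ b p = ℂ ∙ b q) : Fintype.card P ≤ m := by
  simpa using (linearIndependent_of_ne_zero_of_inner_eq_zero hON.tens_left_ne_zero
    fun p q hpq => hON.tens_inner_left_eq_zero hpq (hb p q)).fintype_card_le_finrank

end Orthonormal

section Dichotomy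

variable {ι κ α β : Type*}

lemma forall_eq_or_forall_eq_of_forall_eq_or_eq (f : ι → α) (g : ι → β)
    (h : ∀ i j, f i = f j ∨ g i = g j) : (∀ i j, f i = f j) ∨ ∀ i j, g i = g j := by
  refine or_iff_not_imp_left.2 fun hf => ?_
  push Not at hf
  obtain ⟨i, j, hij⟩ := hf
  suffices hg : ∀ k, g k = g i from fun k l => (hg k).trans (hg l).symm
  intro k
  by_cases hk : f k = f i
  · exact ((h k j).resolve_left (by rwa [hk])).trans ((h i j).resolve_left hij).symm
  · exact (h k i).resolve_left hk

lemma false_of_row_eq_of_row_eq {f : ι × κ → α} {g : ι × κ → β}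
    (hinj : ∀ p q, f p = f q → g p = g q → p = q)
    (hcol : ∀ i k j, f (i, j) = f (k, j) ∨ g (i, j) = g (k, j)) {i k : ι} {j l : κ} (hjl : j ≠ l)
    (hi : ∀ j l, g (i, j) = g (i, l)) (hk : ∀ j l, f (k, j) = f (k, l)) : False := by
  rcases hcol i k j with hfj | hgj <;> rcases hcol i k l with hfl | hgl
  · exact hjl (congrArg Prod.snd (hinj _ _ (hfj.trans ((hk j l).trans hfl.symm)) (hi j l)))
  · exact hjl (congrArg Prod.snd (hinj _ _ (hfj.trans (hk j l)) ((hi j l).trans hgl)))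
  · exact hjl (congrArg Prod.snd (hinj _ _ (hfl.trans (hk l j)) ((hi l j).trans hgj))).symm
  · exact hjl (congrArg Prod.snd (hinj _ _ (hk j l) (hgj.symm.trans ((hi j l).trans hgl))))

theorem rows_cols_dichotomy {f : ι × κ → α} {g : ι × κ → β}
    (hinj : ∀ p q, f p = f q → g p = g q → p = q)
    (hrow : ∀ i j l, f (i, j) = f (i, l) ∨ g (i, j) = g (i, l))
    (hcol : ∀ i k j, f (i, j) = f (k, j) ∨ g (i, j) = g (k, j))
    (hf : (∀ p q, f p = f q) → Subsingleton ι) (hg : (∀ p q, g p = g q) → Subsingleton κ) :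
    ((∀ i j l, f (i, j) = f (i, l)) ∧ ∀ i k j, g (i, j) = g (k, j)) ∨
      ((∀ i j l, g (i, j) = g (i, l)) ∧ ∀ i k j, f (i, j) = f (k, j)) := by
  have hrows i := forall_eq_or_forall_eq_of_forall_eq_or_eq (fun j => f (i, j))
    (fun j => g (i, j)) (hrow i)
  have hcols j := forall_eq_or_forall_eq_of_forall_eq_or_eq (fun i => f (i, j))
    (fun i => g (i, j)) fun i k => hcol i k j
  by_cases hF : ∀ i j l, f (i, j) = f (i, l)
  · refine Or.inl ⟨hF, fun i k j => (hcols j).elim (fun hj => ?_) (· i k)⟩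
    have := hf fun p q => (hF _ _ j).trans ((hj _ _).trans (hF _ _ _))
    rw [Subsingleton.elim i k]
  · push Not at hF
    obtain ⟨i, j, l, hjl⟩ := hF
    have hG : ∀ k j l, g (k, j) = g (k, l) := fun k => (hrows k).resolve_left fun hk =>
      false_of_row_eq_of_row_eq (j := j) (l := l) hinj hcol (fun h => hjl (by rw [h]))
        ((hrows i).resolve_left fun hi => hjl (hi j l)) hk
    refine Or.inr ⟨hG, fun i' k' j' => (hcols j').resolve_right (fun hj => ?_) i' k'⟩
    have := hg fun p q => (hG _ _ j').trans ((hj _ _).trans (hG _ _ _))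
    exact hjl (by rw [Subsingleton.elim j l])

end Dichotomy

section RankOne

variable {m n : ℕ} {ι κ : Type*}

lemma mul_eq_mul_of_sum_sum_smul_tens_eq_tens {A : ι → EuclideanSpace ℂ (Fin m)}
    {B : κ → EuclideanSpace ℂ (Fin n)} (hA : Pairwise fun i k => ⟪A i, A k⟫_ℂ = 0)
    (hB : Pairwise fun j l => ⟪B j, B l⟫_ℂ = 0) (hA₀ : ∀ i, A i ≠ 0) (hB₀ : ∀ j, B j ≠ 0)
    {s : ι → κ → ℂ} {I : Finset ι} {J : Finset κ} {x : EuclideanSpace ℂ (Fin m)}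
    {y : EuclideanSpace ℂ (Fin n)} (h : ∑ i ∈ I, ∑ j ∈ J, s i j • tens (A i) (B j) = tens x y)
    {i i' : ι} {j j' : κ} (hi : i ∈ I) (hi' : i' ∈ I) (hj : j ∈ J) (hj' : j' ∈ J) :
    s i j * s i' j' = s i j' * s i' j := by
  have coeff : ∀ i ∈ I, ∀ j ∈ J,
      s i j * (⟪A i, A i⟫_ℂ * ⟪B j, B j⟫_ℂ) = ⟪A i, x⟫_ℂ * ⟪B j, y⟫_ℂ := by
    intro i hi j hj
    rw [← inner_tens (A i) x (B j) y, ← h, inner_sum, sum_eq_single i, inner_sum,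
      sum_eq_single j, inner_smul_right, inner_tens]
    · exact fun l _ hl => by rw [inner_smul_right, inner_tens, hB hl.symm, mul_zero, mul_zero]
    · exact fun hj' => absurd hj hj'
    · refine fun k _ hk => (inner_sum _ _ _).trans (sum_eq_zero fun l _ => ?_)
      rw [inner_smul_right, inner_tens, hA hk.symm, zero_mul, mul_zero]
    · exact fun hi' => absurd hi hi'
  have hN : ⟪A i, A i⟫_ℂ * ⟪A i', A i'⟫_ℂ * (⟪B j, B j⟫_ℂ * ⟪B j', B j'⟫_ℂ) ≠ 0 := by
    simp only [ne_eq, mul_eq_zero, inner_self_eq_zero, hA₀, hB₀, or_self, not_false_eq_true]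
  refine mul_right_cancel₀ hN ?_
  linear_combination (s i' j' * (⟪A i', A i'⟫_ℂ * ⟪B j', B j'⟫_ℂ)) * coeff i hi j hj
    + (⟪A i, x⟫_ℂ * ⟪B j, y⟫_ℂ) * coeff i' hi' j' hj'
    - (s i' j * (⟪A i', A i'⟫_ℂ * ⟪B j, B j⟫_ℂ)) * coeff i hi j' hj'
    - (⟪A i, x⟫_ℂ * ⟪B j', y⟫_ℂ) * coeff i' hi' j hj

lemma exists_orthonormal_tens_eq_of_norm_mul_norm_eq_one {u : ι → EuclideanSpace ℂ (Fin m)}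
    {w : κ → EuclideanSpace ℂ (Fin n)} (hu : Pairwise fun i k => ⟪u i, u k⟫_ℂ = 0)
    (hw : Pairwise fun j l => ⟪w j, w l⟫_ℂ = 0) (hnorm : ∀ i j, ‖u i‖ * ‖w j‖ = 1)
    (i₀ : ι) (j₀ : κ) :
    ∃ (u' : ι → EuclideanSpace ℂ (Fin m)) (w' : κ → EuclideanSpace ℂ (Fin n)),
      Orthonormal ℂ u' ∧ Orthonormal ℂ w' ∧ ∀ i j, tens (u' i) (w' j) = tens (u i) (w j) := by
  set c := ‖w j₀‖
  have hc : (c : ℂ) ≠ 0 := by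
    exact_mod_cast right_ne_zero_of_mul_eq_one (hnorm i₀ j₀)
  have hwc : ∀ j, ‖w j‖ = c := fun j =>
    mul_left_cancel₀ (left_ne_zero_of_mul_eq_one (hnorm i₀ j))
      ((hnorm i₀ j).trans (hnorm i₀ j₀).symm)
  refine ⟨fun i => (c : ℂ) • u i, fun j => (c : ℂ)⁻¹ • w j, ⟨fun i => ?_, fun i k hik => ?_⟩,
    ⟨fun j => ?_, fun j l hjl => ?_⟩, fun i j => ?_⟩
  · rw [norm_smul, Complex.norm_real, norm_norm, mul_comm]
    exact hnorm i j₀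
  · simp [hu hik]
  · rw [norm_smul, norm_inv, Complex.norm_real, norm_norm, hwc j]
    exact inv_mul_cancel₀ (by exact_mod_cast hc)
  · simp [hw hjl]
  · rw [tens_smul_left, tens_smul_right, smul_smul, mul_inv_cancel₀ hc, one_smul]

lemma Orthonormal.exists_orthonormal_tens_eq [DecidableEq ι] [DecidableEq κ]
    {a : ι × κ → EuclideanSpace ℂ (Fin m)} {b : ι × κ → EuclideanSpace ℂ (Fin n)}
    (hON : Orthonormal ℂ fun p => tens (a p) (b p)) (i₀ : ι) (j₀ : κ)
    (hsum : ∀ (I : Finset ι) (J : Finset κ),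
      ∃ x y, ∑ i ∈ I, ∑ j ∈ J, tens (a (i, j)) (b (i, j)) = tens x y)
    (hrow : ∀ i j, ℂ ∙ a (i, j) = ℂ ∙ a (i, j₀)) (hcol : ∀ i j, ℂ ∙ b (i, j) = ℂ ∙ b (i₀, j)) :
    ∃ (u : ι → EuclideanSpace ℂ (Fin m)) (w : κ → EuclideanSpace ℂ (Fin n)),
      Orthonormal ℂ u ∧ Orthonormal ℂ w ∧ ∀ i j, tens (a (i, j)) (b (i, j)) = tens (u i) (w j) := by
  set A := fun i => a (i, j₀)
  set B := fun j => b (i₀, j)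
  have hA : Pairwise fun i k => ⟪A i, A k⟫_ℂ = 0 := fun i k hik =>
    hON.tens_inner_left_eq_zero (by simp [hik]) ((hcol i j₀).trans (hcol k j₀).symm)
  have hB : Pairwise fun j l => ⟪B j, B l⟫_ℂ = 0 := fun j l hjl =>
    hON.tens_inner_right_eq_zero (by simp [hjl]) ((hrow i₀ j).trans (hrow i₀ l).symm)
  have hs : ∀ i j, ∃ s : ℂ, tens (a (i, j)) (b (i, j)) = s • tens (A i) (B j) := by
    intro i j
    obtain ⟨t, ht⟩ := Submodule.mem_span_singleton.1
      (hrow i j ▸ Submodule.mem_span_singleton_self (a (i, j)))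
    obtain ⟨r, hr⟩ := Submodule.mem_span_singleton.1
      (hcol i j ▸ Submodule.mem_span_singleton_self (b (i, j)))
    exact ⟨t * r, by rw [← ht, ← hr, tens_smul_left, tens_smul_right, smul_smul]⟩
  choose s hs using hs
  have hrank : ∀ i j, s i j * s i₀ j₀ = s i j₀ * s i₀ j := fun i j => by
    obtain ⟨x, y, h⟩ := hsum {i, i₀} {j, j₀}
    simp only [hs] at h
    exact mul_eq_mul_of_sum_sum_smul_tens_eq_tens hA hB (fun i => hON.tens_left_ne_zero _)
      (fun j => hON.tens_right_ne_zero _) h (by simp) (by simp) (by simp) (by simp)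
  have hs₀ : s i₀ j₀ ≠ 0 := fun h => hON.ne_zero (i₀, j₀) (by simp [hs, h])
  have htens : ∀ i j, tens (a (i, j)) (b (i, j)) =
      tens ((s i j₀ / s i₀ j₀) • A i) (s i₀ j • B j) := fun i j => by
    rw [hs, tens_smul_left, tens_smul_right, smul_smul, div_mul_eq_mul_div, ← hrank,
      mul_div_cancel_right₀ _ hs₀]
  obtain ⟨u, w, hu, hw, huw⟩ := exists_orthonormal_tens_eq_of_norm_mul_norm_eq_one
    (u := fun i => (s i j₀ / s i₀ j₀) • A i) (w := fun j => s i₀ j • B j)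
    (fun i k hik => by simp [hA hik])
    (fun j l hjl => by simp [hB hjl])
    (fun i j => by rw [← norm_tens, ← htens]; exact hON.1 (i, j)) i₀ j₀
  exact ⟨u, w, hu, hw, fun i j => (htens i j).trans (huw i j).symm⟩

end RankOne

lemma Orthonormal.exists_linearIsometryEquiv_single {𝕜 E ι : Type*} [RCLike 𝕜]
    [NormedAddCommGroup E] [InnerProductSpace 𝕜 E] [FiniteDimensional 𝕜 E] [Fintype ι]
    [DecidableEq ι] {u : ι → E} (hu : Orthonormal 𝕜 u)
    (hcard : Fintype.card ι = Module.finrank 𝕜 E) :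
    ∃ V : EuclideanSpace 𝕜 ι ≃ₗᵢ[𝕜] E, ∀ i, V (EuclideanSpace.single i 1) = u i :=
  ⟨(OrthonormalBasis.mk hu
      (hu.linearIndependent.span_eq_top_of_card_eq_finrank' hcard).ge).repr.symm,
    fun i => by simp⟩

section BasisImages

variable {m n p q : ℕ}

lemma map_tens_eq_tens_of_single
    (U : EuclideanSpace ℂ (Fin m × Fin n) →ₗ[ℂ] EuclideanSpace ℂ (Fin p × Fin q))
    (V : EuclideanSpace ℂ (Fin m) →ₗ[ℂ] EuclideanSpace ℂ (Fin p))
    (W : EuclideanSpace ℂ (Fin n) →ₗ[ℂ] EuclideanSpace ℂ (Fin q))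
    (h : ∀ i j, U (tens (EuclideanSpace.single i 1) (EuclideanSpace.single j 1)) =
      tens (V (EuclideanSpace.single i 1)) (W (EuclideanSpace.single j 1)))
    (φ : EuclideanSpace ℂ (Fin m)) (ϕ : EuclideanSpace ℂ (Fin n)) :
    U (tens φ ϕ) = tens (V φ) (W ϕ) :=
  LinearMap.congr_fun₂ (LinearMap.ext_basis (EuclideanSpace.basisFun _ ℂ).toBasis
    (EuclideanSpace.basisFun _ ℂ).toBasis (B := tensₗ.compr₂ U) (B' := tensₗ.compl₁₂ V W)
    (by simpa using h)) φ ϕ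

lemma map_tens_eq_tens_swap_of_single
    (U : EuclideanSpace ℂ (Fin m × Fin n) →ₗ[ℂ] EuclideanSpace ℂ (Fin p × Fin q))
    (V : EuclideanSpace ℂ (Fin n) →ₗ[ℂ] EuclideanSpace ℂ (Fin p))
    (W : EuclideanSpace ℂ (Fin m) →ₗ[ℂ] EuclideanSpace ℂ (Fin q))
    (h : ∀ i j, U (tens (EuclideanSpace.single i 1) (EuclideanSpace.single j 1)) =
      tens (V (EuclideanSpace.single j 1)) (W (EuclideanSpace.single i 1)))
    (φ : EuclideanSpace ℂ (Fin m)) (ϕ : EuclideanSpace ℂ (Fin n)) :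
    U (tens φ ϕ) = tens (V ϕ) (W φ) :=
  LinearMap.congr_fun₂ (LinearMap.ext_basis (EuclideanSpace.basisFun _ ℂ).toBasis
    (EuclideanSpace.basisFun _ ℂ).toBasis (B := tensₗ.compr₂ U) (B' := (tensₗ.compl₁₂ V W).flip)
    (by simpa using h)) φ ϕ

lemma LinearIsometryEquiv.orthonormal_tens_of_map_single
    (U : EuclideanSpace ℂ (Fin m × Fin n) ≃ₗᵢ[ℂ] EuclideanSpace ℂ (Fin p × Fin q))
    {a : Fin m × Fin n → EuclideanSpace ℂ (Fin p)} {b : Fin m × Fin n → EuclideanSpace ℂ (Fin q)}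
    (hab : ∀ r : Fin m × Fin n, U (tens (EuclideanSpace.single r.1 1)
      (EuclideanSpace.single r.2 1)) = tens (a r) (b r)) :
    Orthonormal ℂ fun r => tens (a r) (b r) := by
  convert EuclideanSpace.orthonormal_single.comp_linearIsometryEquiv U with r
  rw [← hab r, tens_single_single]
  rfl

theorem Orthonormal.tens_span_dichotomy (hm : 0 < m) (hn : 0 < n)
    {a : Fin m × Fin n → EuclideanSpace ℂ (Fin m)} {b : Fin m × Fin n → EuclideanSpace ℂ (Fin n)}
    (hON : Orthonormal ℂ fun p => tens (a p) (b p))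
    (hsum : ∀ (I : Finset (Fin m)) (J : Finset (Fin n)),
      ∃ x y, ∑ i ∈ I, ∑ j ∈ J, tens (a (i, j)) (b (i, j)) = tens x y) :
    ((∀ i j l, ℂ ∙ a (i, j) = ℂ ∙ a (i, l)) ∧ ∀ i k j, ℂ ∙ b (i, j) = ℂ ∙ b (k, j)) ∨
      ((∀ i j l, ℂ ∙ b (i, j) = ℂ ∙ b (i, l)) ∧ ∀ i k j, ℂ ∙ a (i, j) = ℂ ∙ a (k, j)) := by
  refine rows_cols_dichotomy (fun _ _ => hON.tens_eq_of_span_eq) (fun i j l => ?_)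
    (fun i k j => ?_) (fun ha => ?_) (fun hb => ?_)
  · rcases eq_or_ne j l with rfl | hjl
    · exact Or.inl rfl
    obtain ⟨x, y, h⟩ := hsum {i} {j, l}
    rw [sum_singleton, sum_pair hjl] at h
    exact hON.tens_span_eq_or_span_eq (by simp [hjl]) h
  · rcases eq_or_ne i k with rfl | hik
    · exact Or.inl rfl
    obtain ⟨x, y, h⟩ := hsum {i, k} {j}
    rw [sum_pair hik, sum_singleton, sum_singleton] at h
    exact hON.tens_span_eq_or_span_eq (by simp [hik]) h
  · have hcard : m * n ≤ 1 * n := by simpa using hON.tens_card_le_of_span_left_eq ha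
    exact Fin.subsingleton_iff_le_one.2 (Nat.le_of_mul_le_mul_right hcard hn)
  · have hcard : n * m ≤ 1 * m := by
      simpa [mul_comm] using hON.tens_card_le_of_span_right_eq hb
    exact Fin.subsingleton_iff_le_one.2 (Nat.le_of_mul_le_mul_right hcard hm)

end BasisImages

/-- A unitary mapping every product vector to a product vector is either a tensor
product of unitaries or a swap composed with surjective isometries (the latter
only possible in equal dimensions). -/
theorem product_preserving_unitary_structure
    (d₁ d₂ : ℕ) (h₁ : 0 < d₁) (h₂ : 0 < d₂)
    (U : EuclideanSpace ℂ (Fin d₁ × Fin d₂) ≃ₗᵢ[ℂ] EuclideanSpace ℂ (Fin d₁ × Fin d₂))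
    (hU : ∀ (φ : EuclideanSpace ℂ (Fin d₁)) (ϕ : EuclideanSpace ℂ (Fin d₂)),
      ∃ (φ' : EuclideanSpace ℂ (Fin d₁)) (ϕ' : EuclideanSpace ℂ (Fin d₂)),
        U (tens φ ϕ) = tens φ' ϕ') :
    (∃ (V : EuclideanSpace ℂ (Fin d₁) ≃ₗᵢ[ℂ] EuclideanSpace ℂ (Fin d₁))
       (W : EuclideanSpace ℂ (Fin d₂) ≃ₗᵢ[ℂ] EuclideanSpace ℂ (Fin d₂)),
        ∀ φ ϕ, U (tens φ ϕ) = tens (V φ) (W ϕ)) ∨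
    ((∃ (V : EuclideanSpace ℂ (Fin d₂) ≃ₗᵢ[ℂ] EuclideanSpace ℂ (Fin d₁))
       (W : EuclideanSpace ℂ (Fin d₁) ≃ₗᵢ[ℂ] EuclideanSpace ℂ (Fin d₂)),
        ∀ φ ϕ, U (tens φ ϕ) = tens (V ϕ) (W φ)) ∧ d₁ = d₂) := by
  choose a b hab using fun p : Fin d₁ × Fin d₂ =>
    hU (EuclideanSpace.single p.1 1) (EuclideanSpace.single p.2 1)
  have hON := U.orthonormal_tens_of_map_single hab
  have hsum : ∀ (I : Finset (Fin d₁)) (J : Finset (Fin d₂)),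
      ∃ x y, ∑ i ∈ I, ∑ j ∈ J, tens (a (i, j)) (b (i, j)) = tens x y := fun I J => by
    obtain ⟨x, y, h⟩ := hU (∑ i ∈ I, EuclideanSpace.single i 1) (∑ j ∈ J, EuclideanSpace.single j 1)
    exact ⟨x, y, by simpa only [tens_sum_sum, map_sum, ← hab] using h⟩
  rcases hON.tens_span_dichotomy h₁ h₂ hsum with ⟨hrow, hcol⟩ | ⟨hrow, hcol⟩
  · obtain ⟨u, w, hu, hw, huw⟩ := hON.exists_orthonormal_tens_eq ⟨0, h₁⟩ ⟨0, h₂⟩ hsum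
      (fun i j => hrow i j _) (fun i j => hcol i _ j)
    obtain ⟨V, hV⟩ := hu.exists_linearIsometryEquiv_single (by simp)
    obtain ⟨W, hW⟩ := hw.exists_linearIsometryEquiv_single (by simp)
    exact Or.inl ⟨V, W, map_tens_eq_tens_of_single U.toLinearMap V.toLinearMap W.toLinearMap
      fun i j => by simp [hab (i, j), hV, hW, huw]⟩
  · obtain ⟨u, w, hu, hw, huw⟩ := (hON.comp _ Prod.swap_injective).exists_orthonormal_tens_eq
      (a := a ∘ Prod.swap) (b := b ∘ Prod.swap) ⟨0, h₂⟩ ⟨0, h₁⟩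
      (fun J I => let ⟨x, y, h⟩ := hsum I J; ⟨x, y, by rw [sum_comm]; exact h⟩)
      (fun j i => hcol i _ j) (fun j i => hrow i j _)
    have hd : d₁ = d₂ := le_antisymm (by simpa using hw.linearIndependent.fintype_card_le_finrank)
      (by simpa using hu.linearIndependent.fintype_card_le_finrank)
    obtain ⟨V, hV⟩ := hu.exists_linearIsometryEquiv_single (by simp [hd])
    obtain ⟨W, hW⟩ := hw.exists_linearIsometryEquiv_single (by simp [hd])
    exact Or.inr ⟨⟨V, W, map_tens_eq_tens_swap_of_single U.toLinearMap V.toLinearMap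
      W.toLinearMap fun i j => by simp [hab (i, j), hV, hW, ← huw]⟩, hd⟩
end

section
/- Let d be a positive natural number, let T ∈ Matrix (Fin d) (Fin d) ℂ be positive semidefinite, and let ψ ∈ EuclideanSpace ℂ (Fin d) be a unit vector with associated rank-one projection P_ψ (entries (P_ψ)_{jk} = ψ_j · conj(ψ_k)). Then there exists a real number λ > 0 such that T − λ • P_ψ is positive semidefinite if and only if ψ lies in the range of T (equivalently, in the range of the positive semidefinite square root T^{1/2}). -/
/-!
If `T - c • P_ψ ≥ 0` with `c > 0`, then every `v ∈ ker T` satisfies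
`c ‖⟪ψ, v⟫‖² ≤ re ⟪T v, v⟫ = 0`, so `ψ ⊥ ker T = (range T)ᗮ`, i.e. `ψ ∈ range T`.
Conversely, if `ψ = T x`, the Cauchy–Schwarz inequality for the semi-inner product
`⟪T u, v⟫` gives `‖⟪ψ, v⟫‖² ≤ re ⟪T x, x⟫ · re ⟪T v, v⟫`, so `c = (1 + re ⟪T x, x⟫)⁻¹` works.
-/

open scoped ComplexOrder

open InnerProductSpace RCLike

namespace LinearMap

variable {𝕜 E : Type*} [RCLike 𝕜] [NormedAddCommGroup E] [InnerProductSpace 𝕜 E]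

local notation "⟪" x ", " y "⟫" => inner 𝕜 x y

theorem IsPositive.norm_inner_apply_sq_le {T : E →ₗ[𝕜] E} (hT : T.IsPositive) (x y : E) :
    ‖⟪T x, y⟫‖ ^ 2 ≤ re ⟪T x, x⟫ * re ⟪T y, y⟫ := by
  let core : PreInnerProductSpace.Core 𝕜 E :=
    { inner x y := ⟪T x, y⟫
      conj_inner_symm x y := by rw [inner_conj_symm, hT.isSymmetric]
      re_inner_nonneg := hT.re_inner_nonneg_left
      add_left x y z := by rw [map_add, inner_add_left]
      smul_left x y r := by rw [map_smul, inner_smul_left] }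
  have h := @InnerProductSpace.Core.inner_mul_inner_self_le 𝕜 E _ _ _ core x y
  change ‖⟪T x, y⟫‖ * ‖⟪T y, x⟫‖ ≤ re ⟪T x, x⟫ * re ⟪T y, y⟫ at h
  rwa [hT.isSymmetric y x, norm_inner_symm y, ← sq] at h

theorem IsSymmetric.orthogonal_ker [FiniteDimensional 𝕜 E] {T : E →ₗ[𝕜] E}
    (hT : T.IsSymmetric) : (ker T)ᗮ = range T := by
  rw [← hT.orthogonal_range, Submodule.orthogonal_orthogonal]

theorem re_inner_rankOne_self_apply (ψ v : E) :
    re ⟪rankOne 𝕜 ψ ψ v, v⟫ = ‖⟪ψ, v⟫‖ ^ 2 := by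
  rw [rankOne_apply, inner_smul_left, RCLike.conj_mul, ← ofReal_pow, ofReal_re]

theorem IsSymmetric.isPositive_sub_smul_rankOne_iff {T : E →ₗ[𝕜] E} (hT : T.IsSymmetric)
    (c : ℝ) (ψ : E) :
    (T - (c : 𝕜) • (rankOne 𝕜 ψ ψ : E →ₗ[𝕜] E)).IsPositive ↔
      ∀ v, c * ‖⟪ψ, v⟫‖ ^ 2 ≤ re ⟪T v, v⟫ := by
  have hsymm : (T - (c : 𝕜) • (rankOne 𝕜 ψ ψ : E →ₗ[𝕜] E)).IsSymmetric :=
    hT.sub ((isSymmetric_rankOne_self ψ).smul (conj_ofReal c))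
  simp only [IsPositive, hsymm, true_and, sub_apply, smul_apply, inner_sub_left,
    inner_smul_left, conj_ofReal, map_sub, re_ofReal_mul, ContinuousLinearMap.coe_coe,
    re_inner_rankOne_self_apply, sub_nonneg]

theorem IsPositive.exists_isPositive_sub_smul_rankOne_iff [FiniteDimensional 𝕜 E]
    {T : E →ₗ[𝕜] E} (hT : T.IsPositive) (ψ : E) :
    (∃ c : ℝ, 0 < c ∧ (T - (c : 𝕜) • (rankOne 𝕜 ψ ψ : E →ₗ[𝕜] E)).IsPositive) ↔
      ψ ∈ range T := by
  simp_rw [hT.isSymmetric.isPositive_sub_smul_rankOne_iff]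
  constructor
  · rintro ⟨c, hc, h⟩
    rw [← hT.isSymmetric.orthogonal_ker, Submodule.mem_orthogonal']
    intro v hv
    have hle : c * ‖⟪ψ, v⟫‖ ^ 2 ≤ 0 := by simpa [mem_ker.mp hv] using h v
    simpa [hc.ne'] using le_antisymm hle (by positivity)
  · rintro ⟨x, rfl⟩
    have hx := hT.re_inner_nonneg_left x
    refine ⟨(1 + re ⟪T x, x⟫)⁻¹, by positivity, fun v => ?_⟩
    have hv := hT.re_inner_nonneg_left v
    have hcs := hT.norm_inner_apply_sq_le x v
    rw [inv_mul_le_iff₀ (by positivity)]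
    nlinarith

end LinearMap

open Matrix in
theorem Matrix.mem_range_toEuclideanLin {m n 𝕜 : Type*} [RCLike 𝕜] [Fintype n] [DecidableEq n]
    (A : Matrix m n 𝕜) (y : EuclideanSpace 𝕜 m) :
    y ∈ LinearMap.range A.toEuclideanLin ↔ ∃ x, A *ᵥ x = y := by
  constructor
  · rintro ⟨x, rfl⟩
    exact ⟨x.ofLp, rfl⟩
  · rintro ⟨x, hx⟩
    exact ⟨WithLp.toLp 2 x, by simp [hx]⟩

theorem pure_component_iff_mem_range_general
    (d : ℕ) (T : Matrix (Fin d) (Fin d) ℂ) (hT : T.PosSemidef)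
    (ψ : EuclideanSpace ℂ (Fin d)) :
    (∃ lam : ℝ, 0 < lam ∧
        (T - (lam : ℂ) • (Matrix.of fun j k => ψ j * star (ψ k))).PosSemidef) ↔
      (∃ x : Fin d → ℂ, T.mulVec x = ψ) := by
  have hP : Matrix.toEuclideanLin (Matrix.of fun j k => ψ j * star (ψ k)) = rankOne ℂ ψ ψ :=
    (Matrix.toEuclideanLin.symm_apply_eq.mp (symm_toEuclideanLin_rankOne ψ ψ)).symm
  simp_rw [← T.mem_range_toEuclideanLin, ← Matrix.isPositive_toEuclideanLin_iff, map_sub,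
    map_smul, hP]
  exact (Matrix.isPositive_toEuclideanLin_iff.mpr hT).exists_isPositive_sub_smul_rankOne_iff ψ

/-- Hadjisavvas' characterization: a pure state `P_ψ` can be subtracted (with some
positive weight) from a positive semidefinite matrix `T` keeping positivity iff
`ψ` lies in the range of `T`. -/
theorem pure_component_iff_mem_range
    (d : ℕ) (hd : 0 < d) (T : Matrix (Fin d) (Fin d) ℂ) (hT : T.PosSemidef)
    (ψ : EuclideanSpace ℂ (Fin d)) (hψ : ‖ψ‖ = 1) :
    (∃ lam : ℝ, 0 < lam ∧
        (T - (lam : ℂ) • (Matrix.of fun j k => ψ j * star (ψ k))).PosSemidef) ↔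
      (∃ x : Fin d → ℂ, T.mulVec x = ψ) :=
  pure_component_iff_mem_range_general d T hT ψ
end

section
/- Let d be a positive natural number, let P ∈ Matrix (Fin d) (Fin d) ℂ be an orthogonal projection (P = P* = P²), and let (K_j)_{j ∈ J} be a finite family of matrices with ∑_j K_j* K_j = P. Suppose the associated operation is ideal on its outcome: for every density matrix T with trace(T · P) = 1 one has ∑_j K_j T K_j* = T. Then the operation is the Lüders operation: ∑_j K_j T K_j* = P T P for every matrix T ∈ Matrix (Fin d) (Fin d) ℂ. -/
open scoped ComplexOrder Matrix

/-!
Since `∑ⱼ Kⱼᴴ Kⱼ = P` and `(1 - P) P (1 - P) = 0`, every `Kⱼ (1 - P)` vanishes, so `Kⱼ = Kⱼ P` and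
the operation `Φ T = ∑ⱼ Kⱼ T Kⱼᴴ` satisfies `Φ T = Φ (P T P)`. Idealness says that `Φ` fixes every
density matrix supported in the range of `P`; by linearity it fixes every `v vᴴ` with `v` in that
range, by polarization every `v wᴴ` with `v, w` in that range, and these span the matrices `P T P`.
-/

namespace Matrix

theorem vecMulVec_star_polarization {n : Type*} (v w : n → ℂ) :
    (4 : ℂ) • vecMulVec v (star w) =
      vecMulVec (v + w) (star (v + w)) - vecMulVec (v - w) (star (v - w)) +
        Complex.I • (vecMulVec (v + Complex.I • w) (star (v + Complex.I • w)) -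
          vecMulVec (v - Complex.I • w) (star (v - Complex.I • w))) := by
  ext i j
  simp only [vecMulVec_apply, add_apply, sub_apply, smul_apply, Pi.add_apply, Pi.sub_apply,
    Pi.smul_apply, Pi.star_apply, smul_eq_mul, star_add, star_sub, star_mul', Complex.star_def,
    Complex.conj_I]
  linear_combination (2 * (v i * (starRingEnd ℂ) (w j) - w i * (starRingEnd ℂ) (v j))) *
    Complex.I_mul_I

variable {n : Type*} [Fintype n]

theorem eq_zero_of_sum_conjTranspose_mul_self_eq_zero {𝕜 m ι : Type*} [RCLike 𝕜] [Fintype m]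
    [Fintype ι] {A : ι → Matrix m n 𝕜} (h : ∑ i, (A i)ᴴ * A i = 0) (i : ι) : A i = 0 := by
  have htrace := congrArg trace h
  rw [trace_sum, trace_zero, Fintype.sum_eq_zero_iff_of_nonneg
    fun i => (posSemidef_conjTranspose_mul_self (A i)).trace_nonneg] at htrace
  exact trace_conjTranspose_mul_self_eq_zero_iff.mp (congrFun htrace i)

theorem mul_eq_self_of_sum_conjTranspose_mul_eq {𝕜 m ι : Type*} [RCLike 𝕜] [Fintype m]
    [DecidableEq n] [Fintype ι] {P : Matrix n n 𝕜} (hP : IsIdempotentElem P)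
    {K : ι → Matrix m n 𝕜} (hK : ∑ i, (K i)ᴴ * K i = P) (i : ι) : K i * P = K i := by
  have hzero : ∑ i, (K i * (1 - P))ᴴ * (K i * (1 - P)) = 0 := by
    calc ∑ i, (K i * (1 - P))ᴴ * (K i * (1 - P))
        = (1 - P)ᴴ * (∑ i, (K i)ᴴ * K i) * (1 - P) := by
          simp only [conjTranspose_mul, Finset.mul_sum, Finset.sum_mul, Matrix.mul_assoc]
      _ = 0 := by
          rw [hK, Matrix.mul_assoc, Matrix.mul_sub, Matrix.mul_one, hP.eq, sub_self,
            Matrix.mul_zero]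
  have := eq_zero_of_sum_conjTranspose_mul_self_eq_zero hzero i
  rwa [Matrix.mul_sub, Matrix.mul_one, sub_eq_zero, eq_comm] at this

theorem mul_mul_conjTranspose_eq_sum_vecMulVec {R m : Type*} [CommSemiring R] [StarRing R]
    [Fintype m] [DecidableEq n] (A : Matrix m n R) (T : Matrix n n R) :
    A * T * Aᴴ = ∑ a, ∑ b, T a b •
      vecMulVec (A *ᵥ Pi.single a 1) (star (A *ᵥ Pi.single b 1)) := by
  calc A * T * Aᴴ = A * (∑ a, ∑ b, single a b (T a b)) * Aᴴ := by rw [← matrix_eq_sum_single]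
    _ = _ := by
      simp only [Matrix.mul_sum, Matrix.sum_mul]
      refine Finset.sum_congr rfl fun a _ => Finset.sum_congr rfl fun b _ => ?_
      rw [show single a b (T a b) = T a b • single a b 1 by rw [smul_single, smul_eq_mul, mul_one],
        single_eq_single_vecMulVec_single, Matrix.mul_smul, Matrix.smul_mul,
        mul_vecMulVec, vecMulVec_mul, star_mulVec, Pi.star_single, star_one]

theorem vecMulVec_star_mul_eq_self_of_mem_range {R : Type*} [CommSemiring R] [StarRing R]
    {P : Matrix n n R} (hP : Pᴴ = P) (hP2 : IsIdempotentElem P) {u : n → R}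
    (hu : u ∈ LinearMap.range P.mulVecLin) :
    vecMulVec u (star u) * P = vecMulVec u (star u) := by
  obtain ⟨y, rfl⟩ := hu
  have hfixed : star (P *ᵥ y) ᵥ* P = star (P *ᵥ y) := by
    calc star (P *ᵥ y) ᵥ* P = star (Pᴴ *ᵥ (P *ᵥ y)) := by
          rw [star_mulVec Pᴴ, conjTranspose_conjTranspose]
      _ = star (P *ᵥ y) := by rw [hP, mulVec_mulVec, hP2.eq]
  rw [mulVecLin_apply, vecMulVec_mul, hfixed]

end Matrix

open Matrix

def krausMap {R m n ι : Type*} [CommSemiring R] [StarRing R] [Fintype n] [Fintype ι]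
    (K : ι → Matrix m n R) : Matrix n n R →ₗ[R] Matrix m m R where
  toFun T := ∑ i, K i * T * (K i)ᴴ
  map_add' T S := by simp only [Matrix.mul_add, Matrix.add_mul, Finset.sum_add_distrib]
  map_smul' c T := by
    simp only [Matrix.mul_smul, Matrix.smul_mul, Finset.smul_sum, RingHom.id_apply]

theorem krausMap_apply {R m n ι : Type*} [CommSemiring R] [StarRing R] [Fintype n] [Fintype ι]
    (K : ι → Matrix m n R) (T : Matrix n n R) : krausMap K T = ∑ i, K i * T * (K i)ᴴ :=
  rfl

namespace LinearMap

variable {n : Type*} [Fintype n]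

theorem map_eq_self_of_posSemidef_of_mul_eq_self {𝕜 : Type*} [RCLike 𝕜]
    {Φ : Matrix n n 𝕜 →ₗ[𝕜] Matrix n n 𝕜} {P : Matrix n n 𝕜}
    (hΦ : ∀ T : Matrix n n 𝕜, T.PosSemidef → T.trace = 1 → (T * P).trace = 1 → Φ T = T)
    {T : Matrix n n 𝕜} (hT : T.PosSemidef) (hTP : T * P = T) : Φ T = T := by
  obtain htr | htr := eq_or_ne T.trace 0
  · rw [hT.trace_eq_zero_iff.mp htr, map_zero]
  have hpos : 0 < T.trace := lt_of_le_of_ne hT.trace_nonneg htr.symm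
  have hnormalized : (T.trace⁻¹ • T).trace = 1 := by
    rw [trace_smul, smul_eq_mul, inv_mul_cancel₀ htr]
  have hstate := hΦ _ (hT.smul (RCLike.inv_pos_of_pos hpos).le) hnormalized
    (by rwa [Matrix.smul_mul, hTP])
  rwa [map_smul, (smul_right_injective _ (inv_ne_zero htr)).eq_iff] at hstate

theorem map_vecMulVec_star_eq_self_of_forall_mem {Φ : Matrix n n ℂ →ₗ[ℂ] Matrix n n ℂ}
    {V : Submodule ℂ (n → ℂ)} (hΦ : ∀ u ∈ V, Φ (vecMulVec u (star u)) = vecMulVec u (star u))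
    {v w : n → ℂ} (hv : v ∈ V) (hw : w ∈ V) :
    Φ (vecMulVec v (star w)) = vecMulVec v (star w) := by
  have hIw : Complex.I • w ∈ V := V.smul_mem _ hw
  rw [← (smul_right_injective _ (four_ne_zero' ℂ)).eq_iff, ← map_smul,
    vecMulVec_star_polarization]
  simp only [map_add, map_sub, map_smul, hΦ _ (V.add_mem hv hw), hΦ _ (V.sub_mem hv hw),
    hΦ _ (V.add_mem hv hIw), hΦ _ (V.sub_mem hv hIw)]

end LinearMap

theorem ideal_implies_lueders_general
    (d : ℕ) (P : Matrix (Fin d) (Fin d) ℂ)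
    (hP : Pᴴ = P) (hP2 : P * P = P)
    (J : Type) [Fintype J] (K : J → Matrix (Fin d) (Fin d) ℂ)
    (hK : ∑ j, (K j)ᴴ * K j = P)
    (hideal : ∀ T : Matrix (Fin d) (Fin d) ℂ, T.PosSemidef → T.trace = 1 →
      (T * P).trace = 1 → ∑ j, K j * T * (K j)ᴴ = T) :
    ∀ T : Matrix (Fin d) (Fin d) ℂ, ∑ j, K j * T * (K j)ᴴ = P * T * P := by
  have hKP : ∀ j, K j * P = K j := mul_eq_self_of_sum_conjTranspose_mul_eq hP2 hK
  have hfix : ∀ x y, krausMap K (vecMulVec (P *ᵥ x) (star (P *ᵥ y))) =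
      vecMulVec (P *ᵥ x) (star (P *ᵥ y)) := fun x y =>
    LinearMap.map_vecMulVec_star_eq_self_of_forall_mem (fun u hu =>
      LinearMap.map_eq_self_of_posSemidef_of_mul_eq_self hideal (posSemidef_vecMulVec_self_star u)
        (vecMulVec_star_mul_eq_self_of_mem_range hP hP2 hu))
      (LinearMap.mem_range_self P.mulVecLin x) (LinearMap.mem_range_self P.mulVecLin y)
  intro T
  calc ∑ j, K j * T * (K j)ᴴ = ∑ j, (K j * P) * T * (K j * P)ᴴ := by simp only [hKP]
    _ = krausMap K (P * T * Pᴴ) := by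
      simp only [krausMap_apply, conjTranspose_mul, Matrix.mul_assoc]
    _ = P * T * Pᴴ := by
      rw [mul_mul_conjTranspose_eq_sum_vecMulVec]
      simp only [map_sum, map_smul, hfix]
    _ = P * T * P := by rw [hP]

/-- Any ideal measurement operation for a sharp outcome (projection `P`) is the
Lüders operation `T ↦ P T P`. -/
theorem ideal_implies_lueders
    (d : ℕ) (hd : 0 < d) (P : Matrix (Fin d) (Fin d) ℂ)
    (hP : Pᴴ = P) (hP2 : P * P = P)
    (J : Type) [Fintype J] (K : J → Matrix (Fin d) (Fin d) ℂ)
    (hK : ∑ j, (K j)ᴴ * K j = P)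
    (hideal : ∀ T : Matrix (Fin d) (Fin d) ℂ, T.PosSemidef → T.trace = 1 →
      (T * P).trace = 1 → ∑ j, K j * T * (K j)ᴴ = T) :
    ∀ T : Matrix (Fin d) (Fin d) ℂ, ∑ j, K j * T * (K j)ᴴ = P * T * P :=
  ideal_implies_lueders_general d P hP hP2 J K hK hideal
end

section
/- Let d be a positive natural number, let (P_k)_{k ∈ K} be a finite family of pairwise orthogonal projections in Matrix (Fin d) (Fin d) ℂ (P_k = P_k* = P_k², and P_k P_l = 0 for k ≠ l) with ∑_k P_k = 1, and let B ∈ Matrix (Fin d) (Fin d) ℂ be Hermitian. Then the following are equivalent: (a) ∑_k P_k B P_k = B; (b) P_k B = B P_k for all k ∈ K. -/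
open scoped ComplexOrder Matrix

/-! Multiplying `∑ₖ eₖ b eₖ = b` by `eⱼ` on the left, resp. on the right, leaves only the term
`eⱼ b eⱼ` by orthogonality, so `eⱼ b = eⱼ b eⱼ = b eⱼ`. Conversely, if `b` commutes with every `eₖ`
then `∑ₖ eₖ b eₖ = b ∑ₖ eₖ² = b`. -/

section Pinching

variable {R I : Type*} [Semiring R] [Fintype I] {e : I → R}

theorem OrthogonalIdempotents.mul_sum_mul_mul (he : OrthogonalIdempotents e) (b : R) (j : I) :
    e j * ∑ k, e k * b * e k = e j * b * e j := by
  classical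
  simp only [Finset.mul_sum, ← mul_assoc, he.mul_eq, ite_mul, zero_mul,
    Finset.sum_ite_eq, Finset.mem_univ, if_true]

theorem OrthogonalIdempotents.sum_mul_mul_mul (he : OrthogonalIdempotents e) (b : R) (j : I) :
    (∑ k, e k * b * e k) * e j = e j * b * e j := by
  classical
  simp only [Finset.sum_mul, mul_assoc, he.mul_eq, mul_ite, mul_zero,
    Finset.sum_ite_eq', Finset.mem_univ, if_true]

theorem OrthogonalIdempotents.mul_comm_of_sum_mul_mul_eq (he : OrthogonalIdempotents e) {b : R}
    (hb : ∑ k, e k * b * e k = b) (j : I) : e j * b = b * e j := by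
  calc e j * b = e j * ∑ k, e k * b * e k := by rw [hb]
    _ = (∑ k, e k * b * e k) * e j := by rw [he.mul_sum_mul_mul, he.sum_mul_mul_mul]
    _ = b * e j := by rw [hb]

theorem sum_mul_mul_eq_of_mul_comm (hidem : ∀ k, IsIdempotentElem (e k)) (hsum : ∑ k, e k = 1)
    {b : R} (hb : ∀ k, e k * b = b * e k) : ∑ k, e k * b * e k = b := by
  calc ∑ k, e k * b * e k = ∑ k, b * (e k * e k) := by
        simp only [hb, mul_assoc]
    _ = b := by simp only [fun k ↦ (hidem k).eq, ← Finset.mul_sum, hsum, mul_one]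

theorem CompleteOrthogonalIdempotents.sum_mul_mul_eq_iff (he : CompleteOrthogonalIdempotents e)
    (b : R) : ∑ k, e k * b * e k = b ↔ ∀ k, e k * b = b * e k :=
  ⟨he.mul_comm_of_sum_mul_mul_eq, sum_mul_mul_eq_of_mul_comm he.idem he.complete⟩

end Pinching

theorem lueders_theorem_general
    (d : ℕ) (K : Type) [Fintype K]
    (P : K → Matrix (Fin d) (Fin d) ℂ)
    (hP2 : ∀ k, P k * P k = P k)
    (horth : ∀ k l, k ≠ l → P k * P l = 0)
    (hsum : ∑ k, P k = 1)
    (B : Matrix (Fin d) (Fin d) ℂ) :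
    (∑ k, P k * B * P k = B) ↔ (∀ k, P k * B = B * P k) :=
  CompleteOrthogonalIdempotents.sum_mul_mul_eq_iff ⟨⟨hP2, horth⟩, hsum⟩ B

/-- Lüders theorem: the nonselective Lüders measurement of a discrete sharp
observable leaves a Hermitian `B` undisturbed iff `B` commutes with every
spectral projection. -/
theorem lueders_theorem
    (d : ℕ) (hd : 0 < d) (K : Type) [Fintype K]
    (P : K → Matrix (Fin d) (Fin d) ℂ)
    (hP : ∀ k, (P k)ᴴ = P k) (hP2 : ∀ k, P k * P k = P k)
    (horth : ∀ k l, k ≠ l → P k * P l = 0)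
    (hsum : ∑ k, P k = 1)
    (B : Matrix (Fin d) (Fin d) ℂ) (hB : Bᴴ = B) :
    (∑ k, P k * B * P k = B) ↔ (∀ k, P k * B = B * P k) :=
  lueders_theorem_general d K P hP2 horth hsum B
end

section
/- Let d be a positive natural number and let E, B ∈ Matrix (Fin d) (Fin d) ℂ be effects, i.e., both E and 1 − E, and both B and 1 − B, are positive semidefinite. Let E^{1/2} and (1−E)^{1/2} denote the positive semidefinite square roots. Then E^{1/2} B E^{1/2} + (1−E)^{1/2} B (1−E)^{1/2} = B if and only if E B = B E. -/
/-!
Write `S`, `T` for the square roots of `E` and `1 - E`, so `S`, `T` are Hermitian with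
`S² + T² = 1`, and `Φ X = S X S + T X T`. Expanding, the commutators `C = S B - B S` and
`D = T B - B T` of a fixed point `B` of `Φ` (hence `Bᴴ` is one too) satisfy
`Cᴴ C + Dᴴ D = Φ (Bᴴ B) - Bᴴ B`, which has trace zero since `Φ` preserves traces; so `C = D = 0`.
By the continuous functional calculus, `B` commutes with `E` exactly when it commutes with `√E`,
and likewise for `1 - E`.
-/

open scoped ComplexOrder Matrix

/-- The positive semidefinite square root of a positive semidefinite matrix
(the definition `Matrix.PosSemidef.sqrt` of the older Mathlib, removed since). -/
noncomputable def Matrix.PosSemidef.sqrt {n 𝕜 : Type*} [Fintype n] [DecidableEq n] [RCLike 𝕜]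
    {A : Matrix n n 𝕜} (hA : A.PosSemidef) : Matrix n n 𝕜 :=
  hA.1.eigenvectorUnitary.1 * Matrix.diagonal ((↑) ∘ (Real.sqrt ·) ∘ hA.1.eigenvalues) *
  (star hA.1.eigenvectorUnitary : Matrix n n 𝕜)

namespace Matrix

variable {n 𝕜 : Type*} [Fintype n] [DecidableEq n] [RCLike 𝕜]

section Lueders

variable {S T : Matrix n n 𝕜}

lemma trace_conj_add_conj (hST : S * S + T * T = 1) (X : Matrix n n 𝕜) :
    (S * X * S + T * X * T).trace = X.trace := by
  rw [trace_add, trace_mul_cycle, trace_mul_cycle T, ← trace_add, ← add_mul, hST, one_mul]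

lemma conjTranspose_mul_self_commutator_add_eq (hS : Sᴴ = S) (hT : Tᴴ = T)
    (hST : S * S + T * T = 1) {B : Matrix n n 𝕜} (hB : S * B * S + T * B * T = B) :
    (S * B - B * S)ᴴ * (S * B - B * S) + (T * B - B * T)ᴴ * (T * B - B * T) =
      S * (Bᴴ * B) * S + T * (Bᴴ * B) * T - Bᴴ * B := by
  have hBstar : S * Bᴴ * S + T * Bᴴ * T = Bᴴ := by
    simpa only [conjTranspose_add, conjTranspose_mul, hS, hT, mul_assoc] using congr_arg (·ᴴ) hB
  simp only [conjTranspose_sub, conjTranspose_mul, hS, hT]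
  calc _ = Bᴴ * (S * S + T * T) * B - Bᴴ * (S * B * S + T * B * T)
        - (S * Bᴴ * S + T * Bᴴ * T) * B + (S * (Bᴴ * B) * S + T * (Bᴴ * B) * T) := by
          noncomm_ring
    _ = _ := by rw [hST, hB, hBstar, mul_one]; abel

theorem conj_add_conj_eq_self_iff (hS : Sᴴ = S) (hT : Tᴴ = T) (hST : S * S + T * T = 1)
    (B : Matrix n n 𝕜) : S * B * S + T * B * T = B ↔ Commute S B ∧ Commute T B := by
  refine ⟨fun hB ↦ ?_, fun ⟨hSB, hTB⟩ ↦ ?_⟩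
  · have htrace := congr_arg trace (conjTranspose_mul_self_commutator_add_eq hS hT hST hB)
    rw [trace_sub, trace_conj_add_conj hST, sub_self, trace_add] at htrace
    obtain ⟨hS0, hT0⟩ := (add_eq_zero_iff_of_nonneg
      (posSemidef_conjTranspose_mul_self _).trace_nonneg
      (posSemidef_conjTranspose_mul_self _).trace_nonneg).mp htrace
    rw [trace_conjTranspose_mul_self_eq_zero_iff, sub_eq_zero] at hS0 hT0
    exact ⟨hS0, hT0⟩
  · rw [hSB.eq, hTB.eq, mul_assoc, mul_assoc B, ← mul_add, hST, mul_one]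

end Lueders

namespace PosSemidef

variable {A : Matrix n n 𝕜} (hA : A.PosSemidef)

lemma sqrt_eq_cfc : hA.sqrt = cfc Real.sqrt A := by
  rw [hA.isHermitian.cfc_eq, IsHermitian.cfc, Unitary.conjStarAlgAut_apply]
  rfl

lemma sqrt_mul_sqrt : hA.sqrt * hA.sqrt = A := by
  rw [sqrt_eq_cfc, ← cfc_mul ..]
  conv_rhs => rw [← cfc_id ℝ A hA.isHermitian.isSelfAdjoint]
  refine cfc_congr fun x hx ↦ ?_
  obtain ⟨i, rfl⟩ := hA.isHermitian.spectrum_real_eq_range_eigenvalues ▸ hx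
  exact Real.mul_self_sqrt (hA.eigenvalues_nonneg i)

lemma conjTranspose_sqrt : hA.sqrtᴴ = hA.sqrt := by
  rw [sqrt_eq_cfc]
  exact cfc_predicate Real.sqrt A

lemma commute_sqrt_iff {B : Matrix n n 𝕜} : Commute hA.sqrt B ↔ Commute A B :=
  ⟨fun h ↦ hA.sqrt_mul_sqrt ▸ h.mul_left h, fun h ↦ hA.sqrt_eq_cfc ▸ h.cfc_real _⟩

end PosSemidef

end Matrix

theorem generalized_lueders_simple_general
    (d : ℕ) (E B : Matrix (Fin d) (Fin d) ℂ)
    (hE : E.PosSemidef) (hE' : (1 - E).PosSemidef) :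
    hE.sqrt * B * hE.sqrt + hE'.sqrt * B * hE'.sqrt = B ↔ E * B = B * E := by
  have hsum : hE.sqrt * hE.sqrt + hE'.sqrt * hE'.sqrt = 1 := by
    rw [hE.sqrt_mul_sqrt, hE'.sqrt_mul_sqrt, add_sub_cancel]
  rw [Matrix.conj_add_conj_eq_self_iff hE.conjTranspose_sqrt hE'.conjTranspose_sqrt hsum,
    hE.commute_sqrt_iff, hE'.commute_sqrt_iff]
  exact ⟨And.left, fun h ↦ ⟨h, (Commute.one_left B).sub_left h⟩⟩

/-- Generalized Lüders theorem for a simple (two-outcome) observable `{E, 1-E}`: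
the nonselective generalized Lüders operation leaves the effect `B` undisturbed
iff `B` commutes with `E`. -/
theorem generalized_lueders_simple
    (d : ℕ) (hd : 0 < d) (E B : Matrix (Fin d) (Fin d) ℂ)
    (hE : E.PosSemidef) (hE' : (1 - E).PosSemidef)
    (hB : B.PosSemidef) (hB' : (1 - B).PosSemidef) :
    hE.sqrt * B * hE.sqrt + hE'.sqrt * B * hE'.sqrt = B ↔ E * B = B * E :=
  generalized_lueders_simple_general d E B hE hE'
end

section
/- Let d, m be positive natural numbers, H = EuclideanSpace ℂ (Fin d), H_A = EuclideanSpace ℂ (Fin m), and identify H ⊗ H_A with EuclideanSpace ℂ (Fin d × Fin m) via (ψ ⊗ φ)(i,j) = ψ(i) · φ(j); for operators A on H and B on H_A, A ⊗ 1 and 1 ⊗ B denote the corresponding operators acting on the first and second factor. Let (P_k)_{k ∈ K} be a finite family of pairwise orthogonal projections on H with ∑_k P_k = 1, let (Z_k)_{k ∈ K} be pairwise orthogonal projections on H_A with ∑_k Z_k = 1, let φ ∈ H_A be a unit vector, let U be a unitary operator on H ⊗ H_A, and let L, L_A be Hermitian operators on H and H_A respectively. Assume: (i) conservation: U ∘ (L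 ⊗ 1 + 1 ⊗ L_A) = (L ⊗ 1 + 1 ⊗ L_A) ∘ U; (ii) probability reproducibility: ⟨U(ψ ⊗ φ), (1 ⊗ Z_k) U(ψ ⊗ φ)⟩ = ⟨ψ, P_k ψ⟩ for all ψ ∈ H and all k; (iii) repeatability: ⟨U(ψ ⊗ φ), (P_k ⊗ Z_k) U(ψ ⊗ φ)⟩ = ⟨U(ψ ⊗ φ), (1 ⊗ Z_k) U(ψ ⊗ φ)⟩ for all ψ ∈ H and all k. Then L commutes with every P_k: L P_k = P_k L for all k ∈ K. -/
/-!
Let `J ψ = ψ ⊗ φ`, an isometry, and `V = U J`. Polarizing the two measurement hypotheses gives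
`Vᴴ (1 ⊗ Z_k) V = Vᴴ (P_k ⊗ Z_k) V = P_k`; since `P_k ⊗ Z_k` is a projection this forces
`(P_k ⊗ Z_k) V P_k = V P_k`. Conservation of `M = L ⊗ 1 + 1 ⊗ L_A` gives
`Vᴴ M V = Jᴴ M J = L + ⟨φ, L_A φ⟩ 1`, so for `k ≠ l`
`P_k L P_l = (V P_k)ᴴ (P_k ⊗ Z_k) M (P_l ⊗ Z_l) (V P_l)`, which vanishes because `P_k P_l = 0` and
`Z_k Z_l = 0`. As `∑ P_k = 1`, an operator whose off-diagonal blocks vanish commutes with every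
`P_k`.
-/

open scoped ComplexOrder Matrix Kronecker

namespace Matrix

theorem eq_of_forall_star_dotProduct_mulVec_self_eq {n : Type*} [Fintype n] [DecidableEq n]
    {A B : Matrix n n ℂ} (h : ∀ v, star v ⬝ᵥ A *ᵥ v = star v ⬝ᵥ B *ᵥ v) : A = B := by
  apply (toLpLin (2 : ENNReal) 2).injective
  refine (ext_inner_map _ _).mp fun x => ?_
  rw [EuclideanSpace.inner_eq_star_dotProduct, EuclideanSpace.inner_eq_star_dotProduct,
    ofLp_toLpLin, ofLp_toLpLin, toLin'_apply, toLin'_apply, dotProduct_comm, star_dotProduct, h,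
    ← star_dotProduct, dotProduct_comm]

section StarRing

variable {R : Type*} [CommSemiring R] [StarRing R] {m n : Type*} [Fintype m]

theorem star_mulVec_dotProduct_mulVec [Fintype n] (A : Matrix m m R) (V : Matrix m n R)
    (v : n → R) :
    star (V *ᵥ v) ⬝ᵥ A *ᵥ (V *ᵥ v) = star v ⬝ᵥ (Vᴴ * A * V) *ᵥ v := by
  rw [star_mulVec, ← dotProduct_mulVec, mulVec_mulVec, mulVec_mulVec, Matrix.mul_assoc]

theorem conjTranspose_mul_mul_mul_of_commute [DecidableEq m] {U M : Matrix m m R}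
    (hU : Uᴴ * U = 1) (hUM : U * M = M * U) (J : Matrix m n R) :
    (U * J)ᴴ * M * (U * J) = Jᴴ * M * J :=
  calc (U * J)ᴴ * M * (U * J) = Jᴴ * (Uᴴ * (M * U)) * J := by
        simp only [conjTranspose_mul, Matrix.mul_assoc]
    _ = Jᴴ * M * J := by rw [← hUM, ← Matrix.mul_assoc Uᴴ, hU, Matrix.one_mul]

theorem mul_conjTranspose_mul_mul_mul_eq_zero [Fintype n] {V : Matrix m n R}
    {Q Q' M : Matrix m m R} {P P' : Matrix n n R} (hQV : Q * (V * P) = V * P)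
    (hQV' : Q' * (V * P') = V * P') (hPh : Pᴴ = P) (hQh : Qᴴ = Q) (hQMQ : Q * M * Q' = 0) : P * (Vᴴ * M * V) * P' = 0 :=
  calc P * (Vᴴ * M * V) * P' = (Q * (V * P))ᴴ * M * (Q' * (V * P')) := by
        rw [hQV, hQV', conjTranspose_mul V, hPh]; simp only [Matrix.mul_assoc]
    _ = (V * P)ᴴ * (Q * M * Q') * (V * P') := by
        rw [conjTranspose_mul Q, hQh]; simp only [Matrix.mul_assoc]
    _ = 0 := by rw [hQMQ, Matrix.mul_zero, Matrix.zero_mul]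

end StarRing

section Projection

variable {R : Type*} [CommRing R] [StarRing R] [PartialOrder R] [StarOrderedRing R]
  [NoZeroDivisors R] {m n : Type*} [Fintype m]

theorem mul_eq_self_of_conjTranspose_mul_mul_eq {Q : Matrix m m R} {V : Matrix m n R}
    (hQh : Qᴴ = Q) (hQp : Q * Q = Q) (h : Vᴴ * Q * V = Vᴴ * V) : Q * V = V := by
  have : (V - Q * V)ᴴ * (V - Q * V) = 0 := by
    simp only [conjTranspose_sub, conjTranspose_mul, hQh, Matrix.sub_mul, Matrix.mul_sub,
      Matrix.mul_assoc]
    rw [← Matrix.mul_assoc Q Q, hQp, ← Matrix.mul_assoc, h]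
    abel
  exact (sub_eq_zero.mp (conjTranspose_mul_self_eq_zero.mp this)).symm

theorem mul_mul_eq_mul_of_conjTranspose_mul_mul_eq [Fintype n] [DecidableEq n]
    {Q : Matrix m m R} {V : Matrix m n R} {P : Matrix n n R} (hQh : Qᴴ = Q) (hQp : Q * Q = Q)
    (hPh : Pᴴ = P) (hPp : P * P = P) (hV : Vᴴ * V = 1) (hQV : Vᴴ * Q * V = P) :
    Q * (V * P) = V * P := by
  refine mul_eq_self_of_conjTranspose_mul_mul_eq hQh hQp ?_
  calc (V * P)ᴴ * Q * (V * P) = P * (Vᴴ * Q * V) * P := by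
        rw [conjTranspose_mul, hPh]; simp only [Matrix.mul_assoc]
    _ = P * (Vᴴ * V) * P := by rw [hQV, hV, Matrix.mul_one, hPp, hPp]
    _ = (V * P)ᴴ * (V * P) := by rw [conjTranspose_mul, hPh]; simp only [Matrix.mul_assoc]

end Projection

section Kronecker

variable {R : Type*} [CommSemiring R] {l n p : Type*}

def tensorRight [DecidableEq n] (φ : p → R) : Matrix (n × p) n R :=
  of fun q i => if q.1 = i then φ q.2 else 0

theorem tensorRight_mulVec [DecidableEq n] [Fintype n] (φ : p → R) (ψ : n → R) :
    tensorRight φ *ᵥ ψ = fun q => ψ q.1 * φ q.2 := by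
  ext q
  simp [tensorRight, mulVec, dotProduct, mul_comm]

theorem conjTranspose_tensorRight_mul_kronecker_mul_tensorRight [StarRing R]
    [DecidableEq l] [DecidableEq n] [Fintype l] [Fintype n] [Fintype p]
    (φ : p → R) (A : Matrix l n R) (B : Matrix p p R) :
    (tensorRight φ : Matrix (l × p) l R)ᴴ * (A ⊗ₖ B) * (tensorRight φ : Matrix (n × p) n R) =
      (star φ ⬝ᵥ B *ᵥ φ) • A := by
  ext i j
  simp [tensorRight, Matrix.mul_apply, Fintype.sum_prod_type, mulVec, dotProduct, Finset.mul_sum,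
    Finset.sum_mul, apply_ite star, ite_mul]
  rw [Finset.sum_comm]
  refine Finset.sum_congr rfl fun x _ => Finset.sum_congr rfl fun y _ => ?_
  ring

theorem conjTranspose_tensorRight_mul_tensorRight [StarRing R] [DecidableEq n] [Fintype n]
    [Fintype p] (φ : p → R) :
    (tensorRight φ : Matrix (n × p) n R)ᴴ * (tensorRight φ : Matrix (n × p) n R) =
      (star φ ⬝ᵥ φ) • (1 : Matrix n n R) := by
  ext i j
  simp [tensorRight, Matrix.mul_apply, Fintype.sum_prod_type, dotProduct, one_apply,
    apply_ite star, ite_mul]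
  exact if_congr eq_comm rfl rfl

theorem kronecker_mul_add_mul_kronecker_eq_zero [Fintype l] [Fintype p] [DecidableEq l]
    [DecidableEq p] {A C X : Matrix l l R} {B D Y : Matrix p p R} (hAC : A * C = 0)
    (hBD : B * D = 0) : (A ⊗ₖ B) * (X ⊗ₖ 1 + 1 ⊗ₖ Y) * (C ⊗ₖ D) = 0 := by
  simp only [Matrix.mul_add, Matrix.add_mul, ← mul_kronecker_mul, Matrix.mul_one,
    Matrix.mul_assoc, hAC, hBD, kronecker_zero, zero_kronecker, add_zero]

end Kronecker

end Matrix

theorem commute_of_sum_eq_one_of_mul_mul_eq_zero {R ι : Type*} [Semiring R] [Fintype ι]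
    {P : ι → R} (hP : ∑ i, P i = 1) {x : R} (hx : ∀ i j, i ≠ j → P i * x * P j = 0) (k : ι) :
    Commute x (P k) := by
  have hleft : x * P k = P k * x * P k :=
    calc x * P k = ∑ i, P i * x * P k := by rw [← Finset.sum_mul, ← Finset.sum_mul, hP, one_mul]
      _ = P k * x * P k := Fintype.sum_eq_single k fun i hi => hx i k hi
  have hright : P k * x = P k * x * P k :=
    calc P k * x = ∑ j, P k * x * P j := by rw [← Finset.mul_sum, hP, mul_one]
      _ = P k * x * P k := Fintype.sum_eq_single k fun j hj => hx k j (Ne.symm hj)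
  rw [Commute, SemiconjBy, hleft, ← hright]

open Matrix

theorem wigner_araki_yanase_general
    (d m : ℕ) (K : Type) [Fintype K]
    (P : K → Matrix (Fin d) (Fin d) ℂ)
    (hPh : ∀ k, (P k)ᴴ = P k) (hPp : ∀ k, P k * P k = P k)
    (hPorth : ∀ k l, k ≠ l → P k * P l = 0)
    (hPsum : ∑ k, P k = 1)
    (Z : K → Matrix (Fin m) (Fin m) ℂ)
    (hZh : ∀ k, (Z k)ᴴ = Z k) (hZp : ∀ k, Z k * Z k = Z k)
    (hZorth : ∀ k l, k ≠ l → Z k * Z l = 0)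
    (φ : EuclideanSpace ℂ (Fin m)) (hφ : ‖φ‖ = 1)
    (U : Matrix (Fin d × Fin m) (Fin d × Fin m) ℂ)
    (hU : U ∈ Matrix.unitaryGroup (Fin d × Fin m) ℂ)
    (L : Matrix (Fin d) (Fin d) ℂ)
    (LA : Matrix (Fin m) (Fin m) ℂ)
    (hcons : U * (L ⊗ₖ (1 : Matrix (Fin m) (Fin m) ℂ) +
                  (1 : Matrix (Fin d) (Fin d) ℂ) ⊗ₖ LA) =
             (L ⊗ₖ (1 : Matrix (Fin m) (Fin m) ℂ) +
              (1 : Matrix (Fin d) (Fin d) ℂ) ⊗ₖ LA) * U)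
    (hprob : ∀ (ψ : Fin d → ℂ) (k : K),
      star (U.mulVec fun p => ψ p.1 * φ p.2) ⬝ᵥ
          (((1 : Matrix (Fin d) (Fin d) ℂ) ⊗ₖ Z k).mulVec
            (U.mulVec fun p => ψ p.1 * φ p.2)) =
        star ψ ⬝ᵥ (P k).mulVec ψ)
    (hrep : ∀ (ψ : Fin d → ℂ) (k : K),
      star (U.mulVec fun p => ψ p.1 * φ p.2) ⬝ᵥ
          ((P k ⊗ₖ Z k).mulVec (U.mulVec fun p => ψ p.1 * φ p.2)) =
        star (U.mulVec fun p => ψ p.1 * φ p.2) ⬝ᵥ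
          (((1 : Matrix (Fin d) (Fin d) ℂ) ⊗ₖ Z k).mulVec
            (U.mulVec fun p => ψ p.1 * φ p.2))) :
    ∀ k, L * P k = P k * L := by
  set M := L ⊗ₖ (1 : Matrix (Fin m) (Fin m) ℂ) + (1 : Matrix (Fin d) (Fin d) ℂ) ⊗ₖ LA
  set J : Matrix (Fin d × Fin m) (Fin d) ℂ := tensorRight φ.ofLp
  set V := U * J
  have hφ1 : star φ.ofLp ⬝ᵥ φ.ofLp = 1 := by
    rw [dotProduct_comm, ← EuclideanSpace.inner_eq_star_dotProduct, inner_self_eq_norm_sq_to_K, hφ]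
    norm_num
  have hUU : Uᴴ * U = 1 := mem_unitaryGroup_iff'.mp hU
  have hVV : Vᴴ * V = 1 := by
    have := conjTranspose_mul_mul_mul_of_commute hUU (Commute.one_right U).eq J
    rwa [Matrix.mul_one, Matrix.mul_one, conjTranspose_tensorRight_mul_tensorRight, hφ1,
      one_smul] at this
  have hVMV : Vᴴ * M * V = L + (star φ.ofLp ⬝ᵥ LA *ᵥ φ.ofLp) • 1 := by
    rw [conjTranspose_mul_mul_mul_of_commute hUU hcons, Matrix.mul_add, Matrix.add_mul,
      conjTranspose_tensorRight_mul_kronecker_mul_tensorRight,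
      conjTranspose_tensorRight_mul_kronecker_mul_tensorRight, one_mulVec, hφ1, one_smul]
  have hVψ (ψ : Fin d → ℂ) : V *ᵥ ψ = U *ᵥ fun p => ψ p.1 * φ p.2 := by
    rw [← mulVec_mulVec, tensorRight_mulVec]
  have hVQV (k : K) : Vᴴ * (P k ⊗ₖ Z k) * V = P k :=
    eq_of_forall_star_dotProduct_mulVec_self_eq fun ψ => by
      rw [← star_mulVec_dotProduct_mulVec, hVψ, hrep, hprob]
  have hQh (k : K) : (P k ⊗ₖ Z k)ᴴ = P k ⊗ₖ Z k := by rw [conjTranspose_kronecker, hPh, hZh]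
  have hfix (k : K) : (P k ⊗ₖ Z k) * (V * P k) = V * P k :=
    mul_mul_eq_mul_of_conjTranspose_mul_mul_eq (hQh k) (by rw [← mul_kronecker_mul, hPp, hZp])
      (hPh k) (hPp k) hVV (hVQV k)
  have hoff (k l : K) (hkl : k ≠ l) : P k * L * P l = 0 := by
    have : P k * (Vᴴ * M * V) * P l = 0 :=
      mul_conjTranspose_mul_mul_mul_eq_zero (hfix k) (hfix l) (hPh k) (hQh k)
        (kronecker_mul_add_mul_kronecker_eq_zero (hPorth k l hkl) (hZorth k l hkl))
    rwa [hVMV, Matrix.mul_add, Matrix.add_mul, Matrix.mul_smul, Matrix.smul_mul, Matrix.mul_one,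
      hPorth k l hkl, smul_zero, add_zero] at this
  exact commute_of_sum_eq_one_of_mul_mul_eq_zero hPsum hoff

/-- Wigner–Araki–Yanase theorem (finite-dimensional version): if a measurement
scheme for a discrete sharp observable `(P_k)` satisfies probability
reproducibility and repeatability, and the coupling `U` conserves the additive
quantity `L ⊗ 1 + 1 ⊗ L_A`, then `L` commutes with every `P_k`. -/
theorem wigner_araki_yanase
    (d m : ℕ) (hd : 0 < d) (hm : 0 < m) (K : Type) [Fintype K]
    (P : K → Matrix (Fin d) (Fin d) ℂ)
    (hPh : ∀ k, (P k)ᴴ = P k) (hPp : ∀ k, P k * P k = P k)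
    (hPorth : ∀ k l, k ≠ l → P k * P l = 0)
    (hPsum : ∑ k, P k = 1)
    (Z : K → Matrix (Fin m) (Fin m) ℂ)
    (hZh : ∀ k, (Z k)ᴴ = Z k) (hZp : ∀ k, Z k * Z k = Z k)
    (hZorth : ∀ k l, k ≠ l → Z k * Z l = 0)
    (hZsum : ∑ k, Z k = 1)
    (φ : EuclideanSpace ℂ (Fin m)) (hφ : ‖φ‖ = 1)
    (U : Matrix (Fin d × Fin m) (Fin d × Fin m) ℂ)
    (hU : U ∈ Matrix.unitaryGroup (Fin d × Fin m) ℂ)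
    (L : Matrix (Fin d) (Fin d) ℂ) (hL : Lᴴ = L)
    (LA : Matrix (Fin m) (Fin m) ℂ) (hLA : LAᴴ = LA)
    (hcons : U * (L ⊗ₖ (1 : Matrix (Fin m) (Fin m) ℂ) +
                  (1 : Matrix (Fin d) (Fin d) ℂ) ⊗ₖ LA) =
             (L ⊗ₖ (1 : Matrix (Fin m) (Fin m) ℂ) +
              (1 : Matrix (Fin d) (Fin d) ℂ) ⊗ₖ LA) * U)
    (hprob : ∀ (ψ : Fin d → ℂ) (k : K),
      star (U.mulVec fun p => ψ p.1 * φ p.2) ⬝ᵥ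
          (((1 : Matrix (Fin d) (Fin d) ℂ) ⊗ₖ Z k).mulVec
            (U.mulVec fun p => ψ p.1 * φ p.2)) =
        star ψ ⬝ᵥ (P k).mulVec ψ)
    (hrep : ∀ (ψ : Fin d → ℂ) (k : K),
      star (U.mulVec fun p => ψ p.1 * φ p.2) ⬝ᵥ
          ((P k ⊗ₖ Z k).mulVec (U.mulVec fun p => ψ p.1 * φ p.2)) =
        star (U.mulVec fun p => ψ p.1 * φ p.2) ⬝ᵥ
          (((1 : Matrix (Fin d) (Fin d) ℂ) ⊗ₖ Z k).mulVec
            (U.mulVec fun p => ψ p.1 * φ p.2))) :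
    ∀ k, L * P k = P k * L :=
  wigner_araki_yanase_general d m K P hPh hPp hPorth hPsum Z hZh hZp hZorth φ hφ U hU L LA hcons
    hprob hrep
end

section
/- Let d be a positive natural number and let P, Q ∈ Matrix (Fin d) (Fin d) ℂ be orthogonal projections whose ranges intersect trivially: range(P) ⊓ range(Q) = ⊥. If A ∈ Matrix (Fin d) (Fin d) ℂ is positive semidefinite with both P − A and Q − A positive semidefinite (i.e., 0 ≤ A ≤ P and 0 ≤ A ≤ Q), then A = 0. -/
/-!
If `0 ≤ A ≤ P`, every vector killed by `P` is killed by `A` (its `A`-expectation is squeezed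
to `0`), so for a projection `P` we get `A = A P`, and taking adjoints `A = P A`: the range of
`A` lies in the range of `P`. Being below both `P` and `Q`, the range of `A` lies in
`range P ⊓ range Q = ⊥`.
-/

open scoped ComplexOrder Matrix

namespace Matrix

variable {n 𝕜 : Type*} [Fintype n] [RCLike 𝕜]

theorem PosSemidef.mulVec_eq_zero_of_posSemidef_sub {A B : Matrix n n 𝕜} (hA : A.PosSemidef)
    (hBA : (B - A).PosSemidef) {x : n → 𝕜} (hx : B *ᵥ x = 0) : A *ᵥ x = 0 := by
  rw [← hA.dotProduct_mulVec_zero_iff]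
  have hBA_x := hBA.dotProduct_mulVec_nonneg x
  rw [sub_mulVec, hx, zero_sub, dotProduct_neg, neg_nonneg] at hBA_x
  exact le_antisymm hBA_x (hA.dotProduct_mulVec_nonneg x)

theorem PosSemidef.mul_eq_self_of_posSemidef_sub {P A : Matrix n n 𝕜} (hP : IsIdempotentElem P)
    (hA : A.PosSemidef) (hPA : (P - A).PosSemidef) : P * A = A := by
  have hAP : A * P = A := ext_iff_mulVec.2 fun x => by
    have hker : P *ᵥ (x - P *ᵥ x) = 0 := by rw [mulVec_sub, mulVec_mulVec, hP.eq, sub_self]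
    have hA_ker := hA.mulVec_eq_zero_of_posSemidef_sub hPA hker
    rwa [mulVec_sub, mulVec_mulVec, sub_eq_zero, eq_comm] at hA_ker
  have hPh : P.IsHermitian := by simpa using hPA.isHermitian.add hA.isHermitian
  calc P * A = (A * P)ᴴ := by rw [conjTranspose_mul, hA.isHermitian.eq, hPh.eq]
    _ = A := by rw [hAP, hA.isHermitian.eq]

theorem PosSemidef.range_mulVecLin_le_of_posSemidef_sub {P A : Matrix n n 𝕜}
    (hP : IsIdempotentElem P) (hA : A.PosSemidef) (hPA : (P - A).PosSemidef) :
    LinearMap.range A.mulVecLin ≤ LinearMap.range P.mulVecLin := by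
  rw [← hA.mul_eq_self_of_posSemidef_sub hP hPA, mulVecLin_mul]
  exact LinearMap.range_comp_le_range _ _

end Matrix

theorem no_joint_effect_of_complementary_projections_general
    (d : ℕ) (P Q A : Matrix (Fin d) (Fin d) ℂ)
    (hP2 : P * P = P)
    (hQ2 : Q * Q = Q)
    (hrange : LinearMap.range P.mulVecLin ⊓ LinearMap.range Q.mulVecLin = ⊥)
    (hA : A.PosSemidef) (hPA : (P - A).PosSemidef) (hQA : (Q - A).PosSemidef) :
    A = 0 := by
  have hrangeA : LinearMap.range A.mulVecLin = ⊥ := eq_bot_iff.2 <| hrange ▸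
    le_inf (hA.range_mulVecLin_le_of_posSemidef_sub hP2 hPA)
      (hA.range_mulVecLin_le_of_posSemidef_sub hQ2 hQA)
  rw [LinearMap.range_eq_bot] at hrangeA
  exact Matrix.ext_iff_mulVec.2 fun x => by simpa using LinearMap.congr_fun hrangeA x

/-- Complementary projections admit no nontrivial joint effect: if the ranges of
two orthogonal projections intersect trivially, then any positive semidefinite
`A` below both must vanish. -/
theorem no_joint_effect_of_complementary_projections
    (d : ℕ) (hd : 0 < d) (P Q A : Matrix (Fin d) (Fin d) ℂ)
    (hPh : Pᴴ = P) (hP2 : P * P = P)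
    (hQh : Qᴴ = Q) (hQ2 : Q * Q = Q)
    (hrange : LinearMap.range P.mulVecLin ⊓ LinearMap.range Q.mulVecLin = ⊥)
    (hA : A.PosSemidef) (hPA : (P - A).PosSemidef) (hQA : (Q - A).PosSemidef) :
    A = 0 :=
  no_joint_effect_of_complementary_projections_general d P Q A hP2 hQ2 hrange hA hPA hQA
end

section
/- Let d be a positive natural number and let (E_i)_{i ∈ Fin n} be a finite family of positive semidefinite matrices in Matrix (Fin d) (Fin d) ℂ with ∑_i E_i = 1 (a discrete POVM on ℂ^d). Then there exist a positive natural number m, a unit vector φ ∈ EuclideanSpace ℂ (Fin m), a unitary operator U on EuclideanSpace ℂ (Fin d × Fin m) (with (ψ ⊗ φ)(a,b) = ψ(a)·φ(b) and 1 ⊗ Z acting on the second factor), and pairwise orthogonal projections (Z_i)_{i ∈ Fin n} on EuclideanSpace ℂ (Fin m) with ∑_i Z_i = 1, such that ⟨U(ψ ⊗ φ), (1 ⊗ Z_i) U(ψ ⊗ φ)⟩ = ⟨ψ, E_i ψ⟩ for every ψ ∈ EuclideanSpace ℂ (Fin d) and every i. -/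
/-!
Naimark dilation: factor each effect as `E i = (S i)ᴴ * S i`. Stacking the blocks `S i` gives a
matrix `V : (d × n) × d` with `Vᴴ * V = ∑ i, E i = 1`, i.e. an isometry `ψ ↦ ∑ i, S i ψ ⊗ eᵢ`.
Complete its columns to an orthonormal basis to get a unitary `U` with `U (ψ ⊗ e₀) = V ψ`.
With pointer projections `Z i = eᵢ eᵢᴴ`, the probability of outcome `i` is
`‖S i ψ‖² = ⟪ψ, E i ψ⟫`.
-/

open scoped ComplexOrder Matrix Kronecker

namespace Matrix

variable {m n ι R : Type*}

def stack (S : ι → Matrix m n R) : Matrix (m × ι) n R :=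
  of fun p b => S p.2 p.1 b

lemma conjTranspose_stack_mul_stack [Fintype m] [Fintype ι] [NonUnitalSemiring R] [StarRing R]
    (S : ι → Matrix m n R) : (stack S)ᴴ * stack S = ∑ i, (S i)ᴴ * S i := by
  ext b b'
  simp only [mul_apply, sum_apply, Fintype.sum_prod_type_right, conjTranspose_apply, stack,
    of_apply]

lemma dotProduct_one_kronecker_single_mulVec [Fintype m] [Fintype ι] [DecidableEq m]
    [DecidableEq ι] [NonAssocSemiring R] (u v : m × ι → R) (i : ι) :
    u ⬝ᵥ (((1 : Matrix m m R) ⊗ₖ single i i 1) *ᵥ v) =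
      (fun a => u (a, i)) ⬝ᵥ fun a => v (a, i) := by
  have hproj : ((1 : Matrix m m R) ⊗ₖ single i i 1) *ᵥ v =
      fun p => if p.2 = i then v (p.1, i) else 0 := by
    ext ⟨a, j⟩
    simp [mulVec, dotProduct, Fintype.sum_prod_type, one_apply, single_apply, ite_and, eq_comm]
  simp [hproj, dotProduct, Fintype.sum_prod_type_right]

lemma mulVec_mul_single_eq_of_submatrix_eq [Fintype m] [Fintype ι] [DecidableEq ι]
    [NonAssocSemiring R] {U : Matrix (m × ι) (m × ι) R} {V : Matrix (m × ι) m R} {i₀ : ι}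
    (hUV : U.submatrix id (·, i₀) = V) (ψ : m → R) :
    U *ᵥ (fun q => ψ q.1 * (Pi.single i₀ 1 : ι → R) q.2) = V *ᵥ ψ := by
  subst hUV
  ext p
  simp [mulVec, dotProduct, Fintype.sum_prod_type_right, Pi.single_apply]

lemma exists_mem_unitaryGroup_submatrix_eq {𝕜 : Type*} [RCLike 𝕜] [Fintype m] [Fintype ι]
    [DecidableEq m] [DecidableEq ι] (V : Matrix (m × ι) m 𝕜) (hV : Vᴴ * V = 1) (i₀ : ι) :
    ∃ U ∈ unitaryGroup (m × ι) 𝕜, U.submatrix id (·, i₀) = V := by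
  have hcols : Orthonormal 𝕜 ({q : m × ι | q.2 = i₀}.domRestrict
      fun q => WithLp.toLp 2 fun p => V p q.1) := by
    rw [orthonormal_iff_ite]
    rintro ⟨⟨b, j⟩, hj : j = i₀⟩ ⟨⟨b', j'⟩, hj' : j' = i₀⟩
    subst hj hj'
    have hVbb' := congrFun (congrFun hV b) b'
    simp only [mul_apply, conjTranspose_apply, RCLike.star_def, one_apply] at hVbb'
    simpa [PiLp.inner_apply, mul_comm] using hVbb'
  obtain ⟨B, hB⟩ := hcols.exists_orthonormalBasis_extension_of_card_eq (by simp)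
  refine ⟨(EuclideanSpace.basisFun _ 𝕜).toBasis.toMatrix B,
    (EuclideanSpace.basisFun _ 𝕜).toMatrix_orthonormalBasis_mem_unitary B, ?_⟩
  ext p b
  simp [Module.Basis.toMatrix_apply, hB (b, i₀) rfl]

end Matrix

open Matrix in
theorem povm_admits_measurement_scheme_general
    (d n : ℕ) (hn : 0 < n)
    (E : Fin n → Matrix (Fin d) (Fin d) ℂ)
    (hE : ∀ i, (E i).PosSemidef) (hEsum : ∑ i, E i = 1) :
    ∃ (m : ℕ), 0 < m ∧
    ∃ (φ : EuclideanSpace ℂ (Fin m)), ‖φ‖ = 1 ∧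
    ∃ (U : Matrix (Fin d × Fin m) (Fin d × Fin m) ℂ),
      U ∈ Matrix.unitaryGroup (Fin d × Fin m) ℂ ∧
    ∃ (Z : Fin n → Matrix (Fin m) (Fin m) ℂ),
      (∀ i, (Z i)ᴴ = Z i) ∧ (∀ i, Z i * Z i = Z i) ∧
      (∀ i j, i ≠ j → Z i * Z j = 0) ∧ (∑ i, Z i = 1) ∧
      (∀ (ψ : Fin d → ℂ) (i : Fin n),
        star (U.mulVec fun p => ψ p.1 * φ p.2) ⬝ᵥ
            (((1 : Matrix (Fin d) (Fin d) ℂ) ⊗ₖ Z i).mulVec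
              (U.mulVec fun p => ψ p.1 * φ p.2)) =
          star ψ ⬝ᵥ (E i).mulVec ψ) := by
  open scoped MatrixOrder in
  choose S hS using fun i => CStarAlgebra.nonneg_iff_eq_star_mul_self.mp (hE i).nonneg
  let i₀ : Fin n := ⟨0, hn⟩
  have hisometry : (stack S)ᴴ * stack S = 1 := by
    rw [conjTranspose_stack_mul_stack, ← hEsum]
    exact Finset.sum_congr rfl fun i _ => (hS i).symm
  obtain ⟨U, hU, hUS⟩ := exists_mem_unitaryGroup_submatrix_eq (stack S) hisometry i₀
  refine ⟨n, hn, EuclideanSpace.single i₀ 1, by simp, U, hU, fun i => single i i 1,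
    fun i => by simp [conjTranspose_single], fun i => by simp [single_mul_single_same],
    fun i j hij => single_mul_single_of_ne _ _ _ _ hij _, sum_single_one, fun ψ i => ?_⟩
  simp only [PiLp.ofLp_single]
  rw [mulVec_mul_single_eq_of_submatrix_eq hUS, dotProduct_one_kronecker_single_mulVec]
  show star (S i *ᵥ ψ) ⬝ᵥ S i *ᵥ ψ = _
  rw [hS i, star_mulVec, ← dotProduct_mulVec, mulVec_mulVec, star_eq_conjTranspose]

/-- Fundamental theorem of quantum measurement theory, existence half (finite
dimensions, finite outcomes): every discrete POVM admits an implementation by a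
measurement scheme with a pure initial apparatus state, a unitary coupling and a
sharp pointer observable, satisfying probability reproducibility. -/
theorem povm_admits_measurement_scheme
    (d n : ℕ) (hd : 0 < d) (hn : 0 < n)
    (E : Fin n → Matrix (Fin d) (Fin d) ℂ)
    (hE : ∀ i, (E i).PosSemidef) (hEsum : ∑ i, E i = 1) :
    ∃ (m : ℕ), 0 < m ∧
    ∃ (φ : EuclideanSpace ℂ (Fin m)), ‖φ‖ = 1 ∧
    ∃ (U : Matrix (Fin d × Fin m) (Fin d × Fin m) ℂ),
      U ∈ Matrix.unitaryGroup (Fin d × Fin m) ℂ ∧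
    ∃ (Z : Fin n → Matrix (Fin m) (Fin m) ℂ),
      (∀ i, (Z i)ᴴ = Z i) ∧ (∀ i, Z i * Z i = Z i) ∧
      (∀ i j, i ≠ j → Z i * Z j = 0) ∧ (∑ i, Z i = 1) ∧
      (∀ (ψ : Fin d → ℂ) (i : Fin n),
        star (U.mulVec fun p => ψ p.1 * φ p.2) ⬝ᵥ
            (((1 : Matrix (Fin d) (Fin d) ℂ) ⊗ₖ Z i).mulVec
              (U.mulVec fun p => ψ p.1 * φ p.2)) =
          star ψ ⬝ᵥ (E i).mulVec ψ) :=
  povm_admits_measurement_scheme_general d n hn E hE hEsum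
end

section
/- Let d be a positive natural number, let n be a positive natural number, and for each i ∈ Fin n let (K_{i,j})_{j ∈ J_i} be a finite family of matrices in Matrix (Fin d) (Fin d) ℂ such that ∑_{i,j} K_{i,j}* K_{i,j} = 1. Define the operations Φ_i(T) := ∑_{j ∈ J_i} K_{i,j} T K_{i,j}*. Then there exist a positive natural number m, a unit vector φ ∈ EuclideanSpace ℂ (Fin m), a unitary matrix U on ℂ^{d·m} (indexed by Fin d × Fin m, with T ⊗ P_φ the Kronecker-type product ((T ⊗ P_φ)_{(a,b),(a',b')} = T_{a a'} (P_φ)_{b b'}) and B ⊗ Z_i defined analogously), and pairwise orthogonal projections (Z_i)_{i ∈ Fin n} on ℂ^m with ∑_i Z_i = 1, such that for every matrix T ∈ Matrix (Fin d) (Fin d) ℂ, every B ∈ Matrix (Fin d) (Fin d) ℂ, and every i: trace((B ⊗ Z_i) · U (T ⊗ P_φ) U*) = trace(Φ_i(T) · B). -/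
open scoped Matrix Kronecker

/-
Stinespring dilation.  Stacking the Kraus operators `K_s` (indexed by the pairs `s = (i, j)`)
gives `V x = ∑ₛ K_s x ⊗ eₛ`, an isometry `ℂ^d → ℂ^d ⊗ ℂ^m` because `∑ₛ K_s* K_s = 1`.
Any unitary `U` with `U (x ⊗ eₛ₀) = V x` turns `T ⊗ P_{eₛ₀}` into `V T V*`, and measuring the
apparatus with the projection `Z_i` onto the span of the `eₛ` with `s = (i, j)` for some `j`
gives `trace((B ⊗ Z_i) V T V*) = ∑ⱼ trace(K_{i,j} T K_{i,j}* B)`.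
-/

open Finset

namespace Matrix

section Unitary

variable {𝕜 n k : Type*} [RCLike 𝕜] [Fintype n] [DecidableEq n] [DecidableEq k]

theorem exists_mem_unitaryGroup_extending (V : Matrix n k 𝕜) (hV : Vᴴ * V = 1)
    (e : k ↪ n) : ∃ U ∈ unitaryGroup n 𝕜, ∀ x a, U x (e a) = V x a := by
  let col : k → EuclideanSpace 𝕜 n := fun a => WithLp.toLp 2 fun x => V x a
  have hcol : Orthonormal 𝕜 col := by
    rw [orthonormal_iff_ite]
    intro a a'
    simpa [col, EuclideanSpace.inner_eq_star_dotProduct, dotProduct, mul_apply, one_apply,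
      mul_comm] using congrFun (congrFun hV a) a'
  let v := Function.extend e col 0
  have hv : ∀ a, v (e a) = col a := e.injective.extend_apply col 0
  have hvs : Orthonormal 𝕜 ((Set.range e).domRestrict v) := by
    convert hcol.comp _ (Equiv.ofInjective e e.injective).symm.injective
    ext ⟨_, a, rfl⟩ : 1
    simp [hv]
  obtain ⟨b, hb⟩ := hvs.exists_orthonormalBasis_extension_of_card_eq finrank_euclideanSpace
  refine ⟨(EuclideanSpace.basisFun n 𝕜).toBasis.toMatrix b,
    (EuclideanSpace.basisFun n 𝕜).toMatrix_orthonormalBasis_mem_unitary b, fun x a => ?_⟩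
  rw [Module.Basis.toMatrix_apply, hb (e a) (Set.mem_range_self a), hv]
  rfl

end Unitary

theorem of_single_mul_star_single_eq_single {𝕜 ι : Type*} [RCLike 𝕜] [DecidableEq ι] (s₀ : ι) :
    (of fun b b' =>
        EuclideanSpace.single s₀ (1 : 𝕜) b * star (EuclideanSpace.single s₀ (1 : 𝕜) b')) =
      single s₀ s₀ 1 := by
  ext b b'
  simp only [of_apply, PiLp.single_apply, single_apply, apply_ite star, star_one, star_zero]
  split_ifs <;> grind

section Kraus

variable {R D ι : Type*} [CommSemiring R] [StarRing R] [Fintype D] [Fintype ι] [DecidableEq ι]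

def krausIsometry (κ : ι → Matrix D D R) : Matrix (D × ι) D R :=
  of fun x a => κ x.2 x.1 a

theorem conjTranspose_krausIsometry_mul_kronecker_diagonal_mul (κ : ι → Matrix D D R)
    (B : Matrix D D R) (w : ι → R) :
    (krausIsometry κ)ᴴ * (B ⊗ₖ diagonal w) * krausIsometry κ =
      ∑ s, w s • ((κ s)ᴴ * B * κ s) := by
  ext a a'
  simp only [krausIsometry, mul_apply, conjTranspose_apply, of_apply, kroneckerMap_apply,
    diagonal_apply, mul_ite, mul_zero, Fintype.sum_prod_type, sum_ite_eq', mem_univ, ↓reduceIte,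
    sum_apply, smul_apply, smul_eq_mul]
  rw [Finset.sum_comm]
  simp only [Finset.mul_sum, Finset.sum_mul]
  refine sum_congr rfl fun s _ => sum_congr rfl fun c _ => sum_congr rfl fun c' _ => by ring

theorem conjTranspose_krausIsometry_mul [DecidableEq D] (κ : ι → Matrix D D R) :
    (krausIsometry κ)ᴴ * krausIsometry κ = ∑ s, (κ s)ᴴ * κ s := by
  simpa using conjTranspose_krausIsometry_mul_kronecker_diagonal_mul κ 1 1

theorem trace_kronecker_diagonal_mul_krausIsometry (κ : ι → Matrix D D R) (B T : Matrix D D R)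
    (w : ι → R) :
    ((B ⊗ₖ diagonal w) * (krausIsometry κ * T * (krausIsometry κ)ᴴ)).trace =
      ∑ s, w s * (κ s * T * (κ s)ᴴ * B).trace := by
  rw [← Matrix.mul_assoc, trace_mul_cycle, ← Matrix.mul_assoc,
    conjTranspose_krausIsometry_mul_kronecker_diagonal_mul, sum_mul, trace_sum]
  refine sum_congr rfl fun s _ => ?_
  rw [smul_mul_assoc, trace_smul, smul_eq_mul]
  congr 1
  simp only [Matrix.mul_assoc]
  rw [trace_mul_comm, Matrix.mul_assoc, trace_mul_comm]
  simp only [Matrix.mul_assoc]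

theorem mul_kronecker_single_mul_conjTranspose [DecidableEq D] {X : Type*}
    (U : Matrix X (D × ι) R) (T : Matrix D D R) (s₀ : ι) :
    U * (T ⊗ₖ single s₀ s₀ 1) * Uᴴ =
      U.submatrix id (·, s₀) * T * (U.submatrix id (·, s₀))ᴴ := by
  ext x y
  simp [mul_apply, Fintype.sum_prod_type, single_apply, ite_and]

theorem exists_unitary_stinespring_dilation {𝕜 : Type*} [RCLike 𝕜] [DecidableEq D]
    (κ : ι → Matrix D D 𝕜) (hκ : ∑ s, (κ s)ᴴ * κ s = 1) (s₀ : ι) :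
    ∃ U ∈ unitaryGroup (D × ι) 𝕜, ∀ T,
      U * (T ⊗ₖ single s₀ s₀ 1) * Uᴴ = krausIsometry κ * T * (krausIsometry κ)ᴴ := by
  obtain ⟨U, hU, hUV⟩ := exists_mem_unitaryGroup_extending (krausIsometry κ)
    (by rw [conjTranspose_krausIsometry_mul, hκ]) ⟨(·, s₀), fun _ _ h => congrArg Prod.fst h⟩
  have hcol : U.submatrix id (·, s₀) = krausIsometry κ := ext fun x a => hUV x a
  exact ⟨U, hU, fun T => by rw [mul_kronecker_single_mul_conjTranspose, hcol]⟩

end Kraus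

section fiberProjection

variable {R ι O : Type*} [Semiring R] [DecidableEq ι] [DecidableEq O] (ℓ : ι → O)

def fiberProjection (o : O) : Matrix ι ι R :=
  diagonal fun s => if ℓ s = o then 1 else 0

theorem conjTranspose_fiberProjection [StarRing R] (o : O) :
    (fiberProjection ℓ o : Matrix ι ι R)ᴴ = fiberProjection ℓ o := by
  simp [fiberProjection, diagonal_conjTranspose, apply_ite star]

theorem sum_fiberProjection [Fintype O] : ∑ o, (fiberProjection ℓ o : Matrix ι ι R) = 1 := by
  ext s t
  simp [fiberProjection, Matrix.sum_apply, diagonal_apply, one_apply]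

variable [Fintype ι]

theorem fiberProjection_mul_self (o : O) :
    (fiberProjection ℓ o : Matrix ι ι R) * fiberProjection ℓ o = fiberProjection ℓ o := by
  rw [fiberProjection, diagonal_mul_diagonal]
  congr 1
  ext s
  split_ifs <;> simp

theorem fiberProjection_mul_of_ne {o o' : O} (h : o ≠ o') :
    (fiberProjection ℓ o : Matrix ι ι R) * fiberProjection ℓ o' = 0 := by
  rw [fiberProjection, fiberProjection, diagonal_mul_diagonal, ← diagonal_zero]
  congr 1
  ext s
  split_ifs <;> simp_all

end fiberProjection

end Matrix

open Matrix

theorem instrument_admits_measurement_scheme_general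
    (d n : ℕ) (hd : 0 < d)
    (r : Fin n → ℕ)
    (K : (i : Fin n) → Fin (r i) → Matrix (Fin d) (Fin d) ℂ)
    (hK : ∑ i, ∑ j, (K i j)ᴴ * K i j = 1) :
    ∃ (m : ℕ), 0 < m ∧
    ∃ (φ : EuclideanSpace ℂ (Fin m)), ‖φ‖ = 1 ∧
    ∃ (U : Matrix (Fin d × Fin m) (Fin d × Fin m) ℂ),
      U ∈ Matrix.unitaryGroup (Fin d × Fin m) ℂ ∧
    ∃ (Z : Fin n → Matrix (Fin m) (Fin m) ℂ),
      (∀ i, (Z i)ᴴ = Z i) ∧ (∀ i, Z i * Z i = Z i) ∧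
      (∀ i j, i ≠ j → Z i * Z j = 0) ∧ (∑ i, Z i = 1) ∧
      (∀ (T B : Matrix (Fin d) (Fin d) ℂ) (i : Fin n),
        ((B ⊗ₖ Z i) *
            (U * (T ⊗ₖ (Matrix.of fun b b' => φ b * star (φ b'))) * Uᴴ)).trace =
          ((∑ j, K i j * T * (K i j)ᴴ) * B).trace) := by
  classical
  have : Nonempty (Fin d) := ⟨⟨0, hd⟩⟩
  have hS : Nonempty (Σ i, Fin (r i)) := by
    by_contra h
    rw [not_nonempty_iff] at h
    rw [← Fintype.sum_sigma fun s : Σ i, Fin (r i) => (K s.1 s.2)ᴴ * K s.1 s.2, univ_eq_empty,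
      sum_empty] at hK
    exact zero_ne_one hK
  let e := (Fintype.equivFin (Σ i, Fin (r i))).symm
  let κ : Fin _ → Matrix (Fin d) (Fin d) ℂ := fun t => K (e t).1 (e t).2
  have hκ : ∑ t, (κ t)ᴴ * κ t = 1 := by
    rw [e.sum_comp fun s : Σ i, Fin (r i) => (K s.1 s.2)ᴴ * K s.1 s.2, Fintype.sum_sigma, hK]
  let s₀ : Fin (Fintype.card (Σ i, Fin (r i))) := ⟨0, Fintype.card_pos⟩
  obtain ⟨U, hU, hdil⟩ := exists_unitary_stinespring_dilation κ hκ s₀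
  refine ⟨_, Fintype.card_pos, EuclideanSpace.single s₀ 1, by simp, U, hU,
    fiberProjection fun t => (e t).1, conjTranspose_fiberProjection _,
    fiberProjection_mul_self _, fun _ _ => fiberProjection_mul_of_ne _,
    sum_fiberProjection _, fun T B i => ?_⟩
  rw [of_single_mul_star_single_eq_single, hdil, fiberProjection,
    trace_kronecker_diagonal_mul_krausIsometry, sum_mul, trace_sum,
    e.sum_comp fun s => (if s.1 = i then 1 else 0) * (K s.1 s.2 * T * (K s.1 s.2)ᴴ * B).trace,
    Fintype.sum_sigma]
  simp

/-- Fundamental theorem of quantum measurement theory, second half (finite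
dimensions, finite outcomes): every completely positive instrument, given in
Kraus form `Φ_i(T) = ∑_j K_{i,j} T K_{i,j}*` with
`∑_{i,j} K_{i,j}* K_{i,j} = 1`, admits an implementation by a measurement
scheme: the sequential joint probabilities
`trace((B ⊗ Z_i) · U (T ⊗ P_φ) U*)` equal `trace(Φ_i(T) · B)`. -/
theorem instrument_admits_measurement_scheme
    (d n : ℕ) (hd : 0 < d) (hn : 0 < n)
    (r : Fin n → ℕ)
    (K : (i : Fin n) → Fin (r i) → Matrix (Fin d) (Fin d) ℂ)
    (hK : ∑ i, ∑ j, (K i j)ᴴ * K i j = 1) :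
    ∃ (m : ℕ), 0 < m ∧
    ∃ (φ : EuclideanSpace ℂ (Fin m)), ‖φ‖ = 1 ∧
    ∃ (U : Matrix (Fin d × Fin m) (Fin d × Fin m) ℂ),
      U ∈ Matrix.unitaryGroup (Fin d × Fin m) ℂ ∧
    ∃ (Z : Fin n → Matrix (Fin m) (Fin m) ℂ),
      (∀ i, (Z i)ᴴ = Z i) ∧ (∀ i, Z i * Z i = Z i) ∧
      (∀ i j, i ≠ j → Z i * Z j = 0) ∧ (∑ i, Z i = 1) ∧
      (∀ (T B : Matrix (Fin d) (Fin d) ℂ) (i : Fin n),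
        ((B ⊗ₖ Z i) *
            (U * (T ⊗ₖ (Matrix.of fun b b' => φ b * star (φ b'))) * Uᴴ)).trace =
          ((∑ j, K i j * T * (K i j)ᴴ) * B).trace) :=
  instrument_admits_measurement_scheme_general d n hd r K hK
end
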